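/- arXiv:1903.11537 — 2 statements merged into one kernel-verified Lean document; each statement's English description precedes it below -/
import Mathlib

section
/- Let n > 3 be an integer. For every k with 0 ≤ k ≤ n, the k-th Betti number of the real Lie algebra h_3 ⊕ ℝ^{n−3} equals C(n−1, k) + C(n−2, k−2), where C(n−2, k−2) := 0 if k < 2. -/
/-! Chevalley–Eilenberg cohomology with trivial coefficients. -/

section CE

variable (K : Type) [Field K] (g : Type) [LieRing g] [LieAlgebra K g]

/-- The argument vector `(⁅X i, X j⁆, X₀, …, X̂ᵢ, …, X̂ⱼ, …)` used in the
Chevalley–Eilenberg coboundary formula; it is only meaningful when `i < j`. -/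
noncomputable def ceArg {m : ℕ} (X : Fin (m + 2) → g) (i j : Fin (m + 2)) : Fin (m + 1) → g :=
  Fin.cons ⁅X i, X j⁆
    (X ∘ j.succAbove ∘ Fin.succAbove (⟨min i.val m, by omega⟩ : Fin (m + 1)))

/-- The Chevalley–Eilenberg coboundary (trivial coefficients), as a bare function:
`(δ f)(X₀,…,X_k) = Σ_{i<j} (−1)^{i+j} f([Xᵢ,Xⱼ], X₀,…,X̂ᵢ,…,X̂ⱼ,…,X_k)`. -/
noncomputable def ceDeltaFun : ∀ k : ℕ, AlternatingMap K g K (Fin k) → (Fin (k + 1) → g) → K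
  | 0, _, _ => 0
  | m + 1, ω, X =>
    ∑ i : Fin (m + 2), ∑ j : Fin (m + 2),
      (if i < j then (-1 : K) ^ ((i : ℕ) + (j : ℕ)) else 0) • ω (ceArg g X i j)

/-- The Chevalley–Eilenberg coboundary as a linear map into the space of functions. -/
noncomputable def ceDelta (k : ℕ) :
    AlternatingMap K g K (Fin k) →ₗ[K] (Fin (k + 1) → g) → K where
  toFun ω := ceDeltaFun K g k ω
  map_add' ω₁ ω₂ := by
    cases k with
    | zero => funext X; simp [ceDeltaFun]
    | succ m =>
      funext X
      simp only [ceDeltaFun, AlternatingMap.add_apply, smul_add, Finset.sum_add_distrib,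
        Pi.add_apply]
  map_smul' c ω := by
    cases k with
    | zero => funext X; simp [ceDeltaFun]
    | succ m =>
      funext X
      simp only [ceDeltaFun, AlternatingMap.smul_apply, ← smul_comm c, ← Finset.smul_sum,
        RingHom.id_apply, Pi.smul_apply]

/-- Alternating forms, viewed as bare functions (a linear inclusion). -/
noncomputable def ceCoe (k : ℕ) : AlternatingMap K g K (Fin k) →ₗ[K] (Fin k → g) → K where
  toFun ω := ⇑ω
  map_add' := by intros; rfl
  map_smul' := by intros; rfl

/-- The space `Z^k(𝔤, K)` of `k`-cocycles. -/
noncomputable def ceZ (k : ℕ) : Submodule K (AlternatingMap K g K (Fin k)) :=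
  LinearMap.ker (ceDelta K g k)

/-- The space `B^k(𝔤, K)` of `k`-coboundaries. -/
noncomputable def ceB : (k : ℕ) → Submodule K (AlternatingMap K g K (Fin k))
  | 0 => ⊥
  | m + 1 => Submodule.comap (ceCoe K g (m + 1)) (LinearMap.range (ceDelta K g m))

/-- The `k`-th Chevalley–Eilenberg cohomology `H^k(𝔤,K) = Z^k(𝔤,K)/B^k(𝔤,K)`
(with trivial coefficients). -/
noncomputable abbrev ceH (k : ℕ) :=
  @HasQuotient.Quotient (ceZ K g k) (Submodule K (ceZ K g k))
    (@Submodule.hasQuotient K (ceZ K g k) _ (ceZ K g k).addCommGroup (ceZ K g k).module)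
    (Submodule.comap (ceZ K g k).subtype (ceB K g k))

/-- The `k`-th Betti number `b_k(𝔤) = dim H^k(𝔤, K)`. -/
noncomputable def betti (k : ℕ) : ℕ := Module.finrank K (ceH K g k)

end CE

namespace BettiH3

open Finset Matrix Module



lemma sa_val {r : ℕ} (p : Fin (r+1)) (q : Fin r) :
    ((p.succAbove q : Fin (r+1)) : ℕ) = if (q:ℕ) < (p:ℕ) then (q:ℕ) else (q:ℕ)+1 := by
  rw [Fin.succAbove]
  split_ifs with h1 h2 h2
  · rfl
  · exact absurd (by simpa [Fin.lt_def] using h1) h2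
  · exact absurd (by simpa [Fin.lt_def] using h2) h1
  · rfl

/-- The strictly monotone map `Fin m → Fin (m+2)` skipping `i` and `j` (symmetric in `i,j`;
for `i < j` it agrees with the map used in `ceArg`). -/
noncomputable def sk {m : ℕ} (i j : Fin (m+2)) : Fin m → Fin (m+2) :=
  (max i j).succAbove ∘ Fin.succAbove (⟨min (min i j).val m, by omega⟩ : Fin (m + 1))

lemma sk_symm {m : ℕ} (i j : Fin (m+2)) : sk i j = sk j i := by
  simp [sk, max_comm, min_comm]

lemma sk_of_lt {m : ℕ} {i j : Fin (m+2)} (h : i < j) :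
    sk i j = j.succAbove ∘ Fin.succAbove (⟨min i.val m, by omega⟩ : Fin (m + 1)) := by
  have h1 : max i j = j := max_eq_right h.le
  have h2 : (min i j).val = i.val := by rw [min_eq_left h.le]
  simp only [sk, h1, h2]

lemma sk_val {m : ℕ} (i j : Fin (m+2)) (hij : i ≠ j) (t : Fin m) :
    ((sk i j t : Fin (m+2)) : ℕ) =
      if (t:ℕ) < min (i:ℕ) (j:ℕ) then (t:ℕ)
      else if (t:ℕ)+1 < max (i:ℕ) (j:ℕ) then (t:ℕ)+1 else (t:ℕ)+2 := by
  have hne : (i:ℕ) ≠ (j:ℕ) := fun h => hij (Fin.ext h)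
  have hminv : ((min i j : Fin (m+2)) : ℕ) = min (i:ℕ) (j:ℕ) := by
    rcases le_total i j with h | h
    · rw [min_eq_left h, min_eq_left (by exact_mod_cast h)]
    · rw [min_eq_right h, min_eq_right (by exact_mod_cast h)]
  have hmaxv : ((max i j : Fin (m+2)) : ℕ) = max (i:ℕ) (j:ℕ) := by
    rcases le_total i j with h | h
    · rw [max_eq_right h, max_eq_right (by exact_mod_cast h)]
    · rw [max_eq_left h, max_eq_left (by exact_mod_cast h)]
  have hm : min (i:ℕ) (j:ℕ) < max (i:ℕ) (j:ℕ) := by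
    rcases Nat.lt_or_ge (i:ℕ) (j:ℕ) with h | h
    · simpa [min_eq_left h.le, max_eq_right h.le] using h
    · have : (j:ℕ) < (i:ℕ) := lt_of_le_of_ne h (Ne.symm hne)
      simpa [min_eq_right this.le, max_eq_left this.le] using this
  have hmax2 : max (i:ℕ) (j:ℕ) < m + 2 := by
    rcases le_total i j with h | h
    · rw [max_eq_right (by exact_mod_cast h : (i:ℕ) ≤ (j:ℕ))]; exact j.isLt
    · rw [max_eq_left (by exact_mod_cast h : (j:ℕ) ≤ (i:ℕ))]; exact i.isLt
  simp only [sk, Function.comp_apply, sa_val, hminv, hmaxv]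
  split_ifs <;> omega

lemma succAbove_comp {m : ℕ} (i : Fin (m+2)) (i' : Fin (m+1)) :
    i.succAbove ∘ i'.succAbove = sk i (i.succAbove i') := by
  have hne : i ≠ i.succAbove i' := (Fin.succAbove_ne i i').symm
  funext t
  apply Fin.ext
  have hji : ((i.succAbove i' : Fin (m+2)) : ℕ) = if (i':ℕ) < (i:ℕ) then (i':ℕ) else (i':ℕ)+1 :=
    sa_val i i'
  rw [sk_val i (i.succAbove i') hne t]
  simp only [Function.comp_apply, sa_val, hji]
  have h1 := i.isLt; have h2 := i'.isLt; have h3 := t.isLt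
  split_ifs <;> omega


section Laplace

variable {m : ℕ}


variable (A : Matrix (Fin (m+2)) (Fin (m+2)) ℝ)

noncomputable def Dm (i j : Fin (m+2)) : ℝ := (A.submatrix (sk i j) (Fin.succ ∘ Fin.succ)).det

noncomputable def gl (i j : Fin (m+2)) : ℝ :=
  (if i < j then ((-1:ℝ))^((i:ℕ)+(j:ℕ)) else if j < i then -((-1:ℝ))^((i:ℕ)+(j:ℕ)) else 0)
    * (A i 0 * A j 1 * Dm A i j)

lemma det_two_col_expand :
    A.det = ∑ i : Fin (m+2), ∑ i' : Fin (m+1),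
      ((-1:ℝ))^((i:ℕ)) * A i 0 *
        (((-1:ℝ))^((i':ℕ)) * A (i.succAbove i') 1 * Dm A i (i.succAbove i')) := by
  rw [Matrix.det_succ_column_zero]
  refine Finset.sum_congr rfl (fun i _ => ?_)
  rw [Matrix.det_succ_column_zero, Finset.mul_sum]
  refine Finset.sum_congr rfl (fun i' _ => ?_)
  rw [Matrix.submatrix_apply, Matrix.submatrix_submatrix, succAbove_comp]
  show _ = (-1:ℝ)^(i:ℕ) * A i 0 * ((-1:ℝ)^(i':ℕ) * A (i.succAbove i') (Fin.succ 0) * Dm A i (i.succAbove i'))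
  rw [Dm]

lemma gl_lhs :
    (∑ i : Fin (m+2), ∑ j : Fin (m+2),
      (if i < j then ((-1:ℝ))^((i:ℕ)+(j:ℕ)) else 0) *
        ((A i 0 * A j 1 - A i 1 * A j 0) * Dm A i j))
    = ∑ i : Fin (m+2), ∑ j : Fin (m+2), gl A i j := by
  have key : ∀ i j : Fin (m+2),
      (if i < j then ((-1:ℝ))^((i:ℕ)+(j:ℕ)) else 0) * ((A i 0 * A j 1 - A i 1 * A j 0) * Dm A i j)
      = (if i < j then ((-1:ℝ))^((i:ℕ)+(j:ℕ)) else 0) * (A i 0 * A j 1 * Dm A i j)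
        - (if i < j then ((-1:ℝ))^((i:ℕ)+(j:ℕ)) else 0) * (A i 1 * A j 0 * Dm A i j) := by
    intro i j; ring
  simp only [key, Finset.sum_sub_distrib]
  have swap2 : (∑ i : Fin (m+2), ∑ j : Fin (m+2),
      (if i < j then ((-1:ℝ))^((i:ℕ)+(j:ℕ)) else 0) * (A i 1 * A j 0 * Dm A i j))
      = ∑ i : Fin (m+2), ∑ j : Fin (m+2),
      (if j < i then ((-1:ℝ))^((i:ℕ)+(j:ℕ)) else 0) * (A j 1 * A i 0 * Dm A j i) := by
    rw [Finset.sum_comm]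
    refine Finset.sum_congr rfl (fun j _ => Finset.sum_congr rfl (fun i _ => ?_))
    congr 2
    rw [Nat.add_comm]
  rw [swap2, ← Finset.sum_sub_distrib]
  refine Finset.sum_congr rfl (fun i _ => ?_)
  rw [← Finset.sum_sub_distrib]
  refine Finset.sum_congr rfl (fun j _ => ?_)
  have hD : Dm A j i = Dm A i j := by rw [Dm, Dm, sk_symm]
  rcases lt_trichotomy i j with h | h | h
  · simp only [gl, if_pos h, if_neg (asymm h)]; ring
  · subst h; simp only [gl, if_neg (lt_irrefl i)]; ring
  · simp only [gl, if_neg (asymm h), if_pos h, hD]; ring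

lemma gl_diag (i : Fin (m+2)) : gl A i i = 0 := by
  rw [gl, if_neg (lt_irrefl i), if_neg (lt_irrefl i), zero_mul]

lemma gl_succAbove (i : Fin (m+2)) (i' : Fin (m+1)) :
    gl A i (i.succAbove i')
      = -(((-1:ℝ))^((i:ℕ)) * A i 0 *
          (((-1:ℝ))^((i':ℕ)) * A (i.succAbove i') 1 * Dm A i (i.succAbove i'))) := by
  set j := i.succAbove i' with hj
  have hjval : (j:ℕ) = if (i':ℕ) < (i:ℕ) then (i':ℕ) else (i':ℕ)+1 := sa_val i i'
  rcases Nat.lt_or_ge (i':ℕ) (i:ℕ) with h | h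
  · have hji : j < i := by rw [Fin.lt_def, hjval, if_pos h]; exact h
    have hjv : (j:ℕ) = (i':ℕ) := by rw [hjval, if_pos h]
    rw [gl, if_neg (asymm hji), if_pos hji, hjv]
    have : ((-1:ℝ))^((i:ℕ)+(i':ℕ)) = ((-1:ℝ))^(i:ℕ) * ((-1:ℝ))^(i':ℕ) := pow_add _ _ _
    rw [this]; ring
  · have hij : i < j := by
      rw [Fin.lt_def, hjval, if_neg (Nat.not_lt.mpr h)]; omega
    have hjv : (j:ℕ) = (i':ℕ)+1 := by rw [hjval, if_neg (Nat.not_lt.mpr h)]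
    rw [gl, if_pos hij, hjv]
    have : ((-1:ℝ))^((i:ℕ)+((i':ℕ)+1)) = -(((-1:ℝ))^(i:ℕ) * ((-1:ℝ))^(i':ℕ)) := by
      rw [show (i:ℕ)+((i':ℕ)+1) = ((i:ℕ)+(i':ℕ))+1 by omega, pow_succ, pow_add]; ring
    rw [this]; ring

lemma laplace_two_col :
    (∑ i : Fin (m+2), ∑ j : Fin (m+2),
      (if i < j then ((-1:ℝ))^((i:ℕ)+(j:ℕ)) else 0) *
        ((A i 0 * A j 1 - A i 1 * A j 0) * (A.submatrix (sk i j) (Fin.succ ∘ Fin.succ)).det))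
    = - A.det := by
  have h1 := gl_lhs A
  rw [show (∑ i : Fin (m+2), ∑ j : Fin (m+2),
      (if i < j then ((-1:ℝ))^((i:ℕ)+(j:ℕ)) else 0) *
        ((A i 0 * A j 1 - A i 1 * A j 0) * (A.submatrix (sk i j) (Fin.succ ∘ Fin.succ)).det))
      = ∑ i : Fin (m+2), ∑ j : Fin (m+2), gl A i j from h1]
  rw [det_two_col_expand A, ← Finset.sum_neg_distrib]
  refine Finset.sum_congr rfl (fun i _ => ?_)
  rw [Fin.sum_univ_succAbove (fun j => gl A i j) i, gl_diag, zero_add, ← Finset.sum_neg_distrib]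
  exact Finset.sum_congr rfl (fun i' _ => gl_succAbove A i i')

end Laplace



variable {n : ℕ} {g : Type} [LieRing g] [LieAlgebra ℝ g] (e : Basis (Fin n) ℝ g)

/-- The "minor" alternating map associated to a `k`-element subset `S` of basis indices. -/
noncomputable def wS {k : ℕ} (S : Finset (Fin n)) (hS : S.card = k) :
    AlternatingMap ℝ g ℝ (Fin k) :=
  (Matrix.detRowAlternating (n := Fin k) (R := ℝ)).compLinearMap
    (LinearMap.pi (fun j => e.coord (S.orderEmbOfFin hS j)))

lemma wS_apply {k : ℕ} (S : Finset (Fin n)) (hS : S.card = k) (v : Fin k → g) :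
    wS e S hS v = Matrix.det (Matrix.of fun i j => e.repr (v i) (S.orderEmbOfFin hS j)) := rfl

lemma repr_basis (a b : Fin n) : e.repr (e a) b = if a = b then 1 else 0 := by
  rw [e.repr_self, Finsupp.single_apply]

lemma wS_eval {k : ℕ} (S T : Finset (Fin n)) (hS : S.card = k) (hT : T.card = k) :
    wS e S hS (fun i => e (T.orderEmbOfFin hT i)) = if S = T then 1 else 0 := by
  rw [wS_apply]
  split_ifs with h
  · subst h
    have : (Matrix.of fun i j => e.repr (e (S.orderEmbOfFin hS i)) (S.orderEmbOfFin hS j))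
        = (1 : Matrix (Fin k) (Fin k) ℝ) := by
      ext i j
      rw [Matrix.of_apply, repr_basis]
      by_cases hij : i = j
      · simp [hij, Matrix.one_apply]
      · have : S.orderEmbOfFin hS i ≠ S.orderEmbOfFin hS j := fun hc =>
          hij ((S.orderEmbOfFin hS).injective hc)
        simp [this, Matrix.one_apply, hij]
    rw [this, Matrix.det_one]
  · -- some column of S is not hit by T
    have hexists : ∃ a ∈ S, a ∉ T := by
      by_contra hc
      push_neg at hc
      exact h (Finset.eq_of_subset_of_card_le hc (by omega))
    obtain ⟨a, haS, haT⟩ := hexists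
    obtain ⟨j0, hj0⟩ : ∃ j0, S.orderEmbOfFin hS j0 = a := by
      have : a ∈ Set.range (S.orderEmbOfFin hS) := by
        rw [Finset.range_orderEmbOfFin]; exact haS
      exact this
    apply Matrix.det_eq_zero_of_column_eq_zero j0
    intro i
    rw [Matrix.of_apply, repr_basis, if_neg]
    intro hc
    exact haT (by rw [← hj0, ← hc]; exact Finset.orderEmbOfFin_mem T hT i)


/-- Index type for the standard basis of `k`-forms. -/
abbrev Idx (n k : ℕ) := {S : Finset (Fin n) // S.card = k}

noncomputable def Phi (k : ℕ) : AlternatingMap ℝ g ℝ (Fin k) →ₗ[ℝ] (Idx n k → ℝ) where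
  toFun ω := fun P => ω (fun i => e (P.1.orderEmbOfFin P.2 i))
  map_add' _ _ := rfl
  map_smul' _ _ := rfl

lemma Phi_wS {k : ℕ} (P Q : Idx n k) :
    Phi e k (wS e P.1 P.2) Q = if Q = P then 1 else 0 := by
  show wS e P.1 P.2 _ = _
  rw [wS_eval e P.1 Q.1 P.2 Q.2]
  by_cases h : Q = P
  · simp [h]
  · rw [if_neg (fun hc => h (Subtype.ext hc.symm)), if_neg h]

lemma Phi_injective (k : ℕ) : Function.Injective (Phi e k) := by
  rw [injective_iff_map_eq_zero]
  intro ω hω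
  apply Basis.ext_alternating e
  intro v hv
  -- v injective; sort it
  classical
  have hcard : (Finset.image v Finset.univ).card = k := by
    rw [Finset.card_image_of_injective _ hv, Finset.card_univ, Fintype.card_fin]
  set S : Finset (Fin n) := Finset.image v Finset.univ with hSdef
  have hmem : ∀ i, v i ∈ S := fun i => Finset.mem_image_of_mem v (Finset.mem_univ i)
  let u : Fin k → Fin k := fun i => (S.orderIsoOfFin hcard).symm ⟨v i, hmem i⟩
  have hu : Function.Injective u := by
    intro a b hab
    apply hv
    have h2 : (⟨v a, hmem a⟩ : {x // x ∈ S}) = ⟨v b, hmem b⟩ := by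
      have := congrArg (S.orderIsoOfFin hcard) hab
      simpa [u] using this
    exact congrArg Subtype.val h2
  have hubij : Function.Bijective u := (Finite.injective_iff_bijective).mp hu
  let σ : Equiv.Perm (Fin k) := Equiv.ofBijective u hubij
  have hveq : (fun i => e (v i)) = (fun i => e (S.orderEmbOfFin hcard i)) ∘ σ := by
    funext i
    simp only [Function.comp_apply]
    congr 1
    show v i = S.orderEmbOfFin hcard (u i)
    rw [← Finset.coe_orderIsoOfFin_apply]
    simp [u]
  have h0 : ω (fun i => e (S.orderEmbOfFin hcard i)) = 0 := by
    have := congrFun hω ⟨S, hcard⟩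
    exact this
  rw [hveq, AlternatingMap.map_perm, h0, smul_zero]
  simp

noncomputable def Psi (k : ℕ) : (Idx n k → ℝ) →ₗ[ℝ] AlternatingMap ℝ g ℝ (Fin k) :=
  (Pi.basisFun ℝ (Idx n k)).constr ℝ (fun P => wS e P.1 P.2)

lemma Phi_Psi (k : ℕ) : (Phi e k).comp (Psi e k) = LinearMap.id := by
  apply (Pi.basisFun ℝ (Idx n k)).ext
  intro P
  rw [LinearMap.comp_apply, Psi, Basis.constr_basis, LinearMap.id_apply]
  funext Q
  rw [Phi_wS]
  simp [Pi.basisFun_apply, Pi.single_apply, eq_comm]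

lemma Phi_bijective (k : ℕ) : Function.Bijective (Phi e k) := by
  refine ⟨Phi_injective e k, fun a => ⟨Psi e k a, ?_⟩⟩
  have := congrFun (congrArg (fun f => f.toFun) (Phi_Psi e k)) a
  simpa using this

noncomputable def PhiE (k : ℕ) : AlternatingMap ℝ g ℝ (Fin k) ≃ₗ[ℝ] (Idx n k → ℝ) :=
  LinearEquiv.ofBijective (Phi e k) (Phi_bijective e k)

noncomputable def bB (k : ℕ) : Basis (Idx n k) ℝ (AlternatingMap ℝ g ℝ (Fin k)) :=
  Basis.ofEquivFun (PhiE e k)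

lemma bB_eq_wS {k : ℕ} (P : Idx n k) : bB e k P = wS e P.1 P.2 := by
  apply Phi_injective e k
  have h1 : Phi e k (bB e k P) = Pi.single P 1 := by
    rw [bB]
    have : (PhiE e k) (Basis.ofEquivFun (PhiE e k) P) = Pi.single P 1 := by
      simp [Basis.ofEquivFun]
    exact this
  rw [h1]
  funext Q
  rw [Phi_wS]
  simp [Pi.single_apply]

include e in
lemma fd_alt (k : ℕ) : FiniteDimensional ℝ (AlternatingMap ℝ g ℝ (Fin k)) := by
  classical
  exact Module.Basis.finiteDimensional_of_finite (bB e k)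

include e in
lemma finrank_alt (k : ℕ) :
    Module.finrank ℝ (AlternatingMap ℝ g ℝ (Fin k)) = n.choose k := by
  classical
  rw [Module.finrank_eq_card_basis (bB e k)]
  rw [Fintype.card_finset_len, Fintype.card_fin]


lemma finrank_quot {V : Type} [AddCommGroup V] [Module ℝ V] [FiniteDimensional ℝ V]
    (Z B : Submodule ℝ V) (hBZ : B ≤ Z) :
    finrank ℝ (Z ⧸ Submodule.comap Z.subtype B) = finrank ℝ Z - finrank ℝ B := by
  have h1 := Submodule.finrank_quotient_add_finrank (Submodule.comap Z.subtype B)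
  have h2 : finrank ℝ (Submodule.comap Z.subtype B) = finrank ℝ B :=
    (Submodule.comapSubtypeEquivOfLe hBZ).finrank_eq
  omega

section Specialized
variable {N : ℕ} {g : Type} [LieRing g] [LieAlgebra ℝ g] (e : Basis (Fin (N+4)) ℝ g)
variable (he : ∀ i j : Fin (N+4), ⁅e i, e j⁆ =
      if (i : ℕ) = 1 ∧ (j : ℕ) = 2 then e ⟨0, by omega⟩
      else if (i : ℕ) = 2 ∧ (j : ℕ) = 1 then -e ⟨0, by omega⟩
      else 0)

include he in
lemma bracket_eq (x y : g) :
    ⁅x, y⁆ = (e.repr x 1 * e.repr y 2 - e.repr x 2 * e.repr y 1) • e 0 := by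
  have h0 : (⟨0, by omega⟩ : Fin (N+4)) = 0 := rfl
  let brkt : g →ₗ[ℝ] g →ₗ[ℝ] g := LinearMap.mk₂ ℝ (fun x y => ⁅x,y⁆)
    (fun a b c => add_lie a b c) (fun c a b => smul_lie c a b)
    (fun a b c => lie_add a b c) (fun c a b => lie_smul c a b)
  have hb : ∀ x y : g, ⁅x, y⁆ = brkt x y := fun _ _ => rfl
  rw [hb]
  conv_lhs => rw [← e.sum_repr x, ← e.sum_repr y]
  rw [map_sum]
  have step : ∀ b, brkt (∑ a, e.repr x a • e a) (e.repr y b • e b)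
      = ∑ a, (e.repr x a * e.repr y b) • ⁅e a, e b⁆ := by
    intro b
    rw [map_sum brkt, LinearMap.sum_apply]
    refine Finset.sum_congr rfl (fun a _ => ?_)
    rw [_root_.map_smul, _root_.map_smul brkt, LinearMap.smul_apply, smul_comm (e.repr y b), smul_smul]
    rfl
  rw [Finset.sum_congr rfl (fun b _ => step b), Finset.sum_comm, ← Finset.sum_product']
  have hsub : ({((1:Fin (N+4)),(2:Fin (N+4))), ((2:Fin (N+4)),(1:Fin (N+4)))} : Finset _)
      ⊆ Finset.univ ×ˢ Finset.univ := fun p _ => by simp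
  rw [← Finset.sum_subset hsub ?vanish]
  case vanish =>
    intro p _ hp
    simp only [Finset.mem_insert, Finset.mem_singleton] at hp
    push_neg at hp
    rw [he p.1 p.2, if_neg, if_neg, smul_zero]
    · rintro ⟨h1, h2⟩
      exact hp.2 (Prod.ext (Fin.ext (by rw [h1]; rfl)) (Fin.ext (by rw [h2]; rfl)))
    · rintro ⟨h1, h2⟩
      exact hp.1 (Prod.ext (Fin.ext (by rw [h1]; rfl)) (Fin.ext (by rw [h2]; rfl)))
  have hne : ((1:Fin (N+4)),(2:Fin (N+4))) ≠ ((2:Fin (N+4)),(1:Fin (N+4))) := by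
    simp [Prod.ext_iff, Fin.ext_iff, Nat.mod_eq_of_lt (show 2 < N+4 by omega)]
  rw [Finset.sum_pair hne]
  rw [he 1 2, he 2 1]
  norm_num [h0]
  rw [sub_smul]
  abel


lemma wS_cons_smul {m : ℕ} (S : Finset (Fin (N+4))) (hS : S.card = m+1) (c : ℝ) (x : g)
    (w : Fin m → g) :
    wS e S hS (Fin.cons (c • x) w) = c * wS e S hS (Fin.cons x w) := by
  have h1 := (wS e S hS).map_update_smul (Fin.cons x w) 0 c x
  rw [Fin.update_cons_zero, Fin.update_cons_zero] at h1
  rw [h1, smul_eq_mul]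

lemma wS_cons_e0_zero {m : ℕ} (S : Finset (Fin (N+4))) (hS : S.card = m+1)
    (h0 : (0 : Fin (N+4)) ∉ S) (w : Fin m → g) :
    wS e S hS (Fin.cons (e 0) w) = 0 := by
  rw [wS_apply]
  apply Matrix.det_eq_zero_of_row_eq_zero 0
  intro j
  rw [Matrix.of_apply, Fin.cons_zero, repr_basis, if_neg]
  intro hc
  exact h0 (hc ▸ Finset.orderEmbOfFin_mem S hS j)

lemma wS_cons_e0 {m : ℕ} (S : Finset (Fin (N+4))) (hS : S.card = m+1)
    (h0 : (0 : Fin (N+4)) ∈ S) (hT : (S.erase 0).card = m) (w : Fin m → g) :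
    wS e S hS (Fin.cons (e 0) w) = wS e (S.erase 0) hT w := by
  rw [wS_apply, wS_apply]
  have hS0 : S.orderEmbOfFin hS 0 = 0 := by
    have h' := Finset.orderEmbOfFin_zero hS (Nat.succ_pos m)
    have hz : (⟨0, Nat.succ_pos m⟩ : Fin (m+1)) = 0 := by apply Fin.ext; simp
    rw [hz] at h'
    rw [h']
    exact le_antisymm (Finset.min'_le S 0 h0) (Fin.zero_le _)
  have hrow : ∀ j, (Matrix.of fun (i j : Fin (m+1)) => e.repr ((Fin.cons (e 0) w : Fin (m+1) → g) i) (S.orderEmbOfFin hS j)) 0 j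
      = if j = 0 then 1 else 0 := by
    intro j
    rw [Matrix.of_apply, Fin.cons_zero, repr_basis]
    by_cases hj : j = 0
    · rw [if_pos hj, if_pos]; rw [hj, hS0]
    · rw [if_neg hj, if_neg]
      intro hc
      exact hj ((S.orderEmbOfFin hS).injective (by rw [← hc, hS0]))
  rw [Matrix.det_succ_row_zero]
  rw [Finset.sum_eq_single (0 : Fin (m+1))]
  · rw [hrow 0, if_pos rfl]
    have hemb : (fun j : Fin m => S.orderEmbOfFin hS j.succ)
        = ⇑((S.erase 0).orderEmbOfFin hT) := by
      apply Finset.orderEmbOfFin_unique hT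
      · intro x
        rw [Finset.mem_erase]
        refine ⟨?_, Finset.orderEmbOfFin_mem S hS _⟩
        intro hc
        exact Fin.succ_ne_zero x ((S.orderEmbOfFin hS).injective (by rw [hc, hS0]))
      · intro a b hab
        exact (S.orderEmbOfFin hS).strictMono (Fin.succ_lt_succ_iff.mpr hab)
    have : ((Matrix.of fun (i j : Fin (m+1)) => e.repr ((Fin.cons (e 0) w : Fin (m+1) → g) i) (S.orderEmbOfFin hS j)).submatrix
        Fin.succ (Fin.succAbove 0))
        = (Matrix.of fun (i j : Fin m) => e.repr (w i) ((S.erase 0).orderEmbOfFin hT j)) := by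
      ext i j
      rw [Matrix.submatrix_apply, Matrix.of_apply, Matrix.of_apply, Fin.cons_succ,
        Fin.zero_succAbove, ← hemb]
    rw [this]
    norm_num
  · intro b _ hb
    rw [hrow b, if_neg hb]
    ring
  · intro h; exact absurd (Finset.mem_univ _) h

/-- Result index set: `S` with `0` removed and `{1,2}` added. -/
noncomputable def pushS (S : Finset (Fin (N+4))) : Finset (Fin (N+4)) :=
  insert 1 (insert 2 (S.erase 0))

/-- "Admissible": contributes to the coboundary. -/
def admS (S : Finset (Fin (N+4))) : Prop :=
  (0 : Fin (N+4)) ∈ S ∧ (1 : Fin (N+4)) ∉ S ∧ (2 : Fin (N+4)) ∉ S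

instance admS_dec : DecidablePred (admS (N := N)) := fun _ => by
  unfold admS; infer_instance

lemma card_pushS {k : ℕ} (S : Finset (Fin (N+4))) (hS : S.card = k) (h : admS S) :
    (pushS S).card = k + 1 := by
  have h1 : (1 : Fin (N+4)) ∉ insert 2 (S.erase 0) := by
    rw [Finset.mem_insert]
    rintro (hc | hc)
    · exact absurd (Fin.ext_iff.mp hc) (by simp [Nat.mod_eq_of_lt (show 2 < N+4 by omega)])
    · exact h.2.1 (Finset.mem_of_mem_erase hc)
  have h2 : (2 : Fin (N+4)) ∉ S.erase 0 := fun hc => h.2.2 (Finset.mem_of_mem_erase hc)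
  have hk : 1 ≤ k := by
    rcases Nat.eq_zero_or_pos k with h' | h'
    · exact absurd (Finset.card_eq_zero.mp (hS.trans h')) (Finset.nonempty_iff_ne_empty.mp ⟨0, h.1⟩)
    · exact h'
  rw [pushS, Finset.card_insert_of_notMem h1, Finset.card_insert_of_notMem h2,
    Finset.card_erase_of_mem h.1, hS]
  omega

/-- Column-index function: `1, 2, T₀, T₁, …`. -/
noncomputable def colF (T : Finset (Fin (N+4))) {m : ℕ} (hT : T.card = m) :
    Fin (m+2) → Fin (N+4) :=
  Fin.cons 1 (Fin.cons 2 (fun t => T.orderEmbOfFin hT t))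

lemma colF_zero (T : Finset (Fin (N+4))) {m : ℕ} (hT : T.card = m) : colF T hT 0 = 1 := rfl

lemma colF_one (T : Finset (Fin (N+4))) {m : ℕ} (hT : T.card = m) : colF T hT 1 = 2 := by
  rw [colF, show (1 : Fin (m+2)) = (0 : Fin (m+1)).succ from (Fin.succ_zero_eq_one).symm,
    Fin.cons_succ, Fin.cons_zero]

lemma colF_ss (T : Finset (Fin (N+4))) {m : ℕ} (hT : T.card = m) (t : Fin m) :
    colF T hT t.succ.succ = T.orderEmbOfFin hT t := by
  rw [colF, Fin.cons_succ, Fin.cons_succ]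

noncomputable def bigA (T : Finset (Fin (N+4))) {m : ℕ} (hT : T.card = m)
    (X : Fin (m+2) → g) : Matrix (Fin (m+2)) (Fin (m+2)) ℝ :=
  Matrix.of fun a b => e.repr (X a) (colF T hT b)

lemma mem_erase_ge_three {S : Finset (Fin (N+4))} (h1 : (1:Fin (N+4)) ∉ S)
    (h2 : (2:Fin (N+4)) ∉ S) {x : Fin (N+4)} (hx : x ∈ S.erase 0) : 2 < (x : ℕ) := by
  rcases Finset.mem_erase.mp hx with ⟨hne, hmem⟩
  have e0 : (x:ℕ) ≠ 0 := fun hc => hne (Fin.ext hc)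
  have e1 : (x:ℕ) ≠ 1 := fun hc => h1 (by rwa [show x = 1 from Fin.ext hc] at hmem)
  have e2 : (x:ℕ) ≠ 2 := fun hc => h2 (by rwa [show x = 2 from Fin.ext hc] at hmem)
  omega

lemma strictMono_cons {m : ℕ} (a : Fin (N+4)) (f : Fin m → Fin (N+4)) (hf : StrictMono f)
    (ha : ∀ t, a < f t) : StrictMono (Fin.cons a f : Fin (m+1) → Fin (N+4)) := by
  intro x y hxy
  induction y using Fin.cases with
  | zero => exact absurd hxy (by simp)
  | succ d =>
    rw [Fin.cons_succ]
    induction x using Fin.cases with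
    | zero => rw [Fin.cons_zero]; exact ha d
    | succ c =>
      rw [Fin.cons_succ]
      exact hf (Fin.succ_lt_succ_iff.mp hxy)

lemma colF_strictMono {S : Finset (Fin (N+4))} {m : ℕ} (hT : (S.erase 0).card = m)
    (h1 : (1:Fin (N+4)) ∉ S) (h2 : (2:Fin (N+4)) ∉ S) :
    StrictMono (colF (S.erase 0) hT) := by
  set T := S.erase 0 with hTdef
  have hge : ∀ t : Fin m, 2 < ((T.orderEmbOfFin hT t : Fin (N+4)) : ℕ) :=
    fun t => mem_erase_ge_three h1 h2 (Finset.orderEmbOfFin_mem T hT t)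
  have hinner : StrictMono (Fin.cons 2 (fun t => T.orderEmbOfFin hT t) : Fin (m+1) → Fin (N+4)) := by
    apply strictMono_cons
    · intro a b hab; exact (T.orderEmbOfFin hT).strictMono hab
    · intro t; rw [Fin.lt_def]; exact hge t
  apply strictMono_cons _ _ hinner
  intro t
  induction t using Fin.cases with
  | zero => rw [Fin.cons_zero, Fin.lt_def]; norm_num [Nat.mod_eq_of_lt (show 2 < N+4 by omega)]
  | succ c =>
    rw [Fin.cons_succ, Fin.lt_def]
    have := hge c
    have h1v : ((1:Fin (N+4)):ℕ) = 1 := rfl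
    omega

lemma det_bigA_adm {m : ℕ} (S : Finset (Fin (N+4))) (hS : S.card = m+1)
    (hadm : admS S) (hT : (S.erase 0).card = m) (X : Fin (m+2) → g) :
    (bigA e (S.erase 0) hT X).det = wS e (pushS S) (card_pushS S hS hadm) X := by
  have hmem : ∀ b, colF (S.erase 0) hT b ∈ pushS S := by
    intro b
    refine Fin.cases ?_ (fun c => ?_) b
    · rw [colF_zero]; exact Finset.mem_insert_self _ _
    · rw [colF, Fin.cons_succ]
      refine Fin.cases ?_ (fun d => ?_) c
      · rw [Fin.cons_zero]
        exact Finset.mem_insert_of_mem (Finset.mem_insert_self _ _)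
      · rw [Fin.cons_succ]
        exact Finset.mem_insert_of_mem (Finset.mem_insert_of_mem
          (Finset.orderEmbOfFin_mem _ hT d))
  have hcol : colF (S.erase 0) hT = ⇑((pushS S).orderEmbOfFin (card_pushS S hS hadm)) :=
    Finset.orderEmbOfFin_unique _ hmem (colF_strictMono hT hadm.2.1 hadm.2.2)
  rw [wS_apply]
  congr 1
  ext a b
  rw [bigA, Matrix.of_apply, Matrix.of_apply, hcol]

lemma det_bigA_not_adm {m : ℕ} (S : Finset (Fin (N+4))) (hS : S.card = m+1)
    (h0 : (0:Fin (N+4)) ∈ S) (hnadm : ¬ admS S) (hT : (S.erase 0).card = m)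
    (X : Fin (m+2) → g) : (bigA e (S.erase 0) hT X).det = 0 := by
  have h12 : (1:Fin (N+4)) ∈ S ∨ (2:Fin (N+4)) ∈ S := by
    by_contra hc
    push_neg at hc
    exact hnadm ⟨h0, hc.1, hc.2⟩
  have key : ∀ (y : Fin (N+4)) (b0 : Fin (m+2)), y ∈ S.erase 0 → colF (S.erase 0) hT b0 = y →
      (∃ t : Fin m, t.succ.succ ≠ b0) → True := fun _ _ _ _ _ => trivial
  rcases h12 with h | h
  · have hmem : (1:Fin (N+4)) ∈ (S.erase 0) := Finset.mem_erase.mpr ⟨by simp [Fin.ext_iff], h⟩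
    have : (1:Fin (N+4)) ∈ Set.range ((S.erase 0).orderEmbOfFin hT) := by
      rw [Finset.range_orderEmbOfFin]; exact hmem
    obtain ⟨t, ht⟩ := this
    apply Matrix.det_zero_of_column_eq (show (0 : Fin (m+2)) ≠ t.succ.succ from
      (Fin.succ_ne_zero _).symm)
    intro a
    rw [bigA, Matrix.of_apply, Matrix.of_apply, colF_zero, colF_ss, ht]
  · have hmem : (2:Fin (N+4)) ∈ (S.erase 0) := Finset.mem_erase.mpr ⟨by simp [Fin.ext_iff, Nat.mod_eq_of_lt (show 2 < N+4 by omega)], h⟩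
    have : (2:Fin (N+4)) ∈ Set.range ((S.erase 0).orderEmbOfFin hT) := by
      rw [Finset.range_orderEmbOfFin]; exact hmem
    obtain ⟨t, ht⟩ := this
    apply Matrix.det_zero_of_column_eq (show (1 : Fin (m+2)) ≠ t.succ.succ from ?_)
    · intro a
      rw [bigA, Matrix.of_apply, Matrix.of_apply, colF_one, colF_ss, ht]
    · intro hc
      have := congrArg (fun z : Fin (m+2) => (z:ℕ)) hc
      simp only [Fin.val_succ] at this
      norm_num at this

include he in
theorem delta_wS {k : ℕ} (S : Finset (Fin (N+4))) (hS : S.card = k) :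
    ceDelta ℝ g k (wS e S hS) =
      if h : admS S then -⇑(wS e (pushS S) (card_pushS S hS h)) else 0 := by
  cases k with
  | zero =>
    rw [dif_neg]
    · funext X; rfl
    · intro hc
      rw [Finset.card_eq_zero.mp hS] at hc
      exact absurd hc.1 (Finset.notMem_empty _)
  | succ m =>
    funext X
    have hDel : ceDelta ℝ g (m+1) (wS e S hS) X
        = ∑ i : Fin (m+2), ∑ j : Fin (m+2),
            (if i < j then ((-1:ℝ))^((i:ℕ)+(j:ℕ)) else 0) • wS e S hS (ceArg g X i j) := rfl
    by_cases h0 : (0:Fin (N+4)) ∈ S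
    · have hT : (S.erase 0).card = m := by rw [Finset.card_erase_of_mem h0, hS]; omega
      have key : ∀ i j : Fin (m+2),
          (if i < j then ((-1:ℝ))^((i:ℕ)+(j:ℕ)) else 0) • wS e S hS (ceArg g X i j)
          = (if i < j then ((-1:ℝ))^((i:ℕ)+(j:ℕ)) else 0) *
              (((bigA e (S.erase 0) hT X) i 0 * (bigA e (S.erase 0) hT X) j 1
                - (bigA e (S.erase 0) hT X) i 1 * (bigA e (S.erase 0) hT X) j 0) *
                ((bigA e (S.erase 0) hT X).submatrix (sk i j) (Fin.succ ∘ Fin.succ)).det) := by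
        intro i j
        by_cases hij : i < j
        · rw [smul_eq_mul]
          congr 1
          have harg : ceArg g X i j = Fin.cons ⁅X i, X j⁆ (X ∘ sk i j) := by
            rw [ceArg, sk_of_lt hij]
          rw [harg, bracket_eq e he, wS_cons_smul, wS_cons_e0 e S hS h0 hT]
          have hdet : wS e (S.erase 0) hT (X ∘ sk i j)
              = ((bigA e (S.erase 0) hT X).submatrix (sk i j) (Fin.succ ∘ Fin.succ)).det := by
            rw [wS_apply]
            congr 1
          rw [hdet]
          have hA0 : ∀ a, (bigA e (S.erase 0) hT X) a 0 = e.repr (X a) 1 := by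
            intro a; rw [bigA, Matrix.of_apply, colF_zero]
          have hA1 : ∀ a, (bigA e (S.erase 0) hT X) a 1 = e.repr (X a) 2 := by
            intro a; rw [bigA, Matrix.of_apply, colF_one]
          rw [hA0, hA0, hA1, hA1]
        · rw [if_neg hij, zero_smul, zero_mul]
      rw [hDel, Finset.sum_congr rfl (fun i _ => Finset.sum_congr rfl (fun j _ => key i j)),
        laplace_two_col (bigA e (S.erase 0) hT X)]
      by_cases hadm : admS S
      · rw [dif_pos hadm, det_bigA_adm e S hS hadm hT X, Pi.neg_apply]
      · rw [dif_neg hadm, det_bigA_not_adm e S hS h0 hadm hT X, neg_zero, Pi.zero_apply]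
    · rw [hDel, dif_neg (fun hc => h0 hc.1), Pi.zero_apply]
      apply Finset.sum_eq_zero
      intro i _
      apply Finset.sum_eq_zero
      intro j _
      have hz : wS e S hS (ceArg g X i j) = 0 := by
        rw [ceArg, bracket_eq e he, wS_cons_smul, wS_cons_e0_zero e S hS h0, mul_zero]
      rw [hz, smul_zero]

noncomputable def delta' (k : ℕ) :
    AlternatingMap ℝ g ℝ (Fin k) →ₗ[ℝ] AlternatingMap ℝ g ℝ (Fin (k+1)) :=
  (bB e k).constr ℝ (fun P : Idx (N+4) k =>
    if h : admS P.1 then -(wS e (pushS P.1) (card_pushS P.1 P.2 h)) else 0)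

lemma delta'_wS (k : ℕ) (P : Idx (N+4) k) :
    delta' e k (wS e P.1 P.2)
      = if h : admS P.1 then -(wS e (pushS P.1) (card_pushS P.1 P.2 h)) else 0 := by
  rw [← bB_eq_wS, delta', Basis.constr_basis]

include he in
lemma coe_delta' (k : ℕ) : (ceCoe ℝ g (k+1)).comp (delta' e k) = ceDelta ℝ g k := by
  apply (bB e k).ext
  intro P
  rw [LinearMap.comp_apply, bB_eq_wS, delta'_wS, delta_wS e he P.1 P.2]
  by_cases h : admS P.1
  · rw [dif_pos h, dif_pos h]
    rfl
  · rw [dif_neg h, dif_neg h, map_zero]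

lemma ceCoe_ker (k : ℕ) : LinearMap.ker (ceCoe ℝ g k) = ⊥ := by
  rw [LinearMap.ker_eq_bot]
  intro a b hab
  exact DFunLike.coe_injective hab

include he in
lemma ceZ_eq (k : ℕ) : ceZ ℝ g k = LinearMap.ker (delta' e k) := by
  rw [ceZ, ← coe_delta' e he k, LinearMap.ker_comp, ceCoe_ker, Submodule.comap_bot]

include he in
lemma ceB_eq (k : ℕ) : ceB ℝ g (k+1) = LinearMap.range (delta' e k) := by
  show Submodule.comap (ceCoe ℝ g (k+1)) (LinearMap.range (ceDelta ℝ g k)) = _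
  rw [← coe_delta' e he k, LinearMap.range_comp, Submodule.comap_map_eq, ceCoe_ker, sup_bot_eq]

lemma one_not_mem_insert2erase {S : Finset (Fin (N+4))} (h : admS S) :
    (1 : Fin (N+4)) ∉ insert 2 (S.erase 0) := by
  rw [Finset.mem_insert]
  rintro (hc | hc)
  · exact absurd (Fin.ext_iff.mp hc) (by simp [Nat.mod_eq_of_lt (show 2 < N+4 by omega)])
  · exact h.2.1 (Finset.mem_of_mem_erase hc)

lemma backS_pushS {S : Finset (Fin (N+4))} (h : admS S) :
    insert 0 (((pushS S).erase 1).erase 2) = S := by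
  have h2 : (2 : Fin (N+4)) ∉ S.erase 0 := fun hc => h.2.2 (Finset.mem_of_mem_erase hc)
  rw [pushS, Finset.erase_insert (one_not_mem_insert2erase h), Finset.erase_insert h2,
    Finset.insert_erase h.1]

lemma delta'_comp (k : ℕ) : (delta' e (k+1)).comp (delta' e k) = 0 := by
  apply (bB e k).ext
  intro P
  rw [LinearMap.comp_apply, bB_eq_wS, delta'_wS]
  by_cases h : admS P.1
  · rw [dif_pos h, map_neg,
      delta'_wS e (k+1) ⟨pushS P.1, card_pushS P.1 P.2 h⟩, dif_neg, neg_zero,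
      LinearMap.zero_apply]
    intro hc
    exact hc.2.1 (Finset.mem_insert_self _ _)
  · rw [dif_neg h, map_zero, LinearMap.zero_apply]

lemma range_le_ker_delta' (k : ℕ) :
    LinearMap.range (delta' e k) ≤ LinearMap.ker (delta' e (k+1)) :=
  LinearMap.range_le_ker_iff.mpr (delta'_comp e k)

/-- number of admissible sets -/
noncomputable def APcard (k : ℕ) : ℕ :=
  (Finset.univ.filter (fun P : Idx (N+4) k => admS P.1)).card

lemma finrank_range_delta' (k : ℕ) :
    finrank ℝ (LinearMap.range (delta' e k)) = APcard (N := N) k := by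
  classical
  have hr : LinearMap.range (delta' e k)
      = Submodule.span ℝ (Set.range ((delta' e k) ∘ (bB e k))) := by
    rw [LinearMap.range_eq_map, ← (bB e k).span_eq, Submodule.map_span, ← Set.range_comp]
  have hspan : Submodule.span ℝ (Set.range ((delta' e k) ∘ (bB e k)))
      = Submodule.span ℝ (Set.range (fun Q : {P : Idx (N+4) k // admS P.1} =>
          bB e (k+1) ⟨pushS Q.1.1, card_pushS Q.1.1 Q.1.2 Q.2⟩)) := by
    apply le_antisymm
    · rw [Submodule.span_le]
      rintro x ⟨P, rfl⟩
      show ((delta' e k) ∘ (bB e k)) P ∈ _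
      rw [Function.comp_apply, bB_eq_wS, delta'_wS]
      by_cases h : admS P.1
      · rw [dif_pos h]
        refine Submodule.neg_mem _ (Submodule.subset_span ⟨⟨P, h⟩, ?_⟩)
        exact bB_eq_wS e _
      · rw [dif_neg h]; exact Submodule.zero_mem _
    · rw [Submodule.span_le]
      rintro x ⟨Q, rfl⟩
      show bB e (k+1) ⟨pushS Q.1.1, card_pushS Q.1.1 Q.1.2 Q.2⟩ ∈ _
      have hQ : bB e (k+1) ⟨pushS Q.1.1, card_pushS Q.1.1 Q.1.2 Q.2⟩
          = -((⇑(delta' e k) ∘ ⇑(bB e k)) Q.1) := by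
        rw [Function.comp_apply, bB_eq_wS e Q.1, delta'_wS, dif_pos Q.2, neg_neg, bB_eq_wS]
      rw [hQ]
      exact Submodule.neg_mem _ (Submodule.subset_span ⟨Q.1, rfl⟩)
  have hind : LinearIndependent ℝ (fun Q : {P : Idx (N+4) k // admS P.1} =>
      bB e (k+1) ⟨pushS Q.1.1, card_pushS Q.1.1 Q.1.2 Q.2⟩) := by
    apply (bB e (k+1)).linearIndependent.comp
    intro Q Q' hQ
    have h1 : pushS Q.1.1 = pushS Q'.1.1 := congrArg (fun z : Idx (N+4) (k+1) => z.1) hQ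
    have h2 : Q.1.1 = Q'.1.1 := by
      rw [← backS_pushS Q.2, ← backS_pushS Q'.2, h1]
    exact Subtype.ext (Subtype.ext h2)
  rw [hr, hspan, finrank_span_eq_card hind, APcard, Fintype.card_subtype]

lemma finrank_ker_delta' (k : ℕ) :
    finrank ℝ (LinearMap.ker (delta' e k)) + APcard (N := N) k = (N+4).choose k := by
  haveI := fd_alt e k
  have h1 := LinearMap.finrank_range_add_finrank_ker (delta' e k)
  rw [finrank_range_delta' e k, finrank_alt e k] at h1
  omega

lemma APcard_zero : APcard (N := N) 0 = 0 := by
  rw [APcard, Finset.card_eq_zero, Finset.filter_eq_empty_iff]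
  intro P _
  have : P.1 = ∅ := Finset.card_eq_zero.mp P.2
  intro hc
  rw [this] at hc
  exact absurd hc.1 (Finset.notMem_empty _)

lemma APcard_succ (l : ℕ) : APcard (N := N) (l+1) = (N+1).choose l := by
  classical
  have hcard : ((Finset.univ : Finset (Fin (N+4))) \ {0, 1, 2}).card = N + 1 := by
    rw [Finset.card_sdiff_of_subset (Finset.subset_univ _), Finset.card_univ, Fintype.card_fin]
    have : ({0, 1, 2} : Finset (Fin (N+4))).card = 3 := by
      rw [Finset.card_insert_of_notMem, Finset.card_insert_of_notMem, Finset.card_singleton]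
      · simp [Fin.ext_iff, Nat.mod_eq_of_lt (show 2 < N+4 by omega)]
      · simp [Fin.ext_iff, Nat.mod_eq_of_lt (show 2 < N+4 by omega)]
    rw [this]
    omega
  have htarget : (N+1).choose l
      = (((Finset.univ : Finset (Fin (N+4))) \ {0, 1, 2}).powersetCard l).card := by
    rw [Finset.card_powersetCard, hcard]
  rw [APcard, htarget]
  refine Finset.card_bij' (fun P _ => P.1.erase 0)
    (fun T hT => ⟨insert 0 T, ?_⟩) ?_ ?_ ?_ ?_
  · -- card of insert
    rcases Finset.mem_powersetCard.mp hT with ⟨hsub, hcardT⟩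
    have h0T : (0 : Fin (N+4)) ∉ T := fun hc => by
      have := hsub hc
      simp at this
    rw [Finset.card_insert_of_notMem h0T, hcardT]
  · -- i maps into target
    intro P hP
    have hadm : admS P.1 := (Finset.mem_filter.mp hP).2
    rw [Finset.mem_powersetCard]
    constructor
    · intro x hx
      rcases Finset.mem_erase.mp hx with ⟨hne0, hxS⟩
      have hne1 : x ≠ 1 := fun hc => hadm.2.1 (hc ▸ hxS)
      have hne2 : x ≠ 2 := fun hc => hadm.2.2 (hc ▸ hxS)
      simp [hne0, hne1, hne2]
    · rw [Finset.card_erase_of_mem hadm.1, P.2]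
      omega
  · -- j maps into source
    intro T hT
    rcases Finset.mem_powersetCard.mp hT with ⟨hsub, hcardT⟩
    have hnot : ∀ y : Fin (N+4), y ∈ ({0,1,2} : Finset (Fin (N+4))) → y ∉ T := by
      intro y hy hc
      have := hsub hc
      rw [Finset.mem_sdiff] at this
      exact this.2 hy
    rw [Finset.mem_filter]
    refine ⟨Finset.mem_univ _, Finset.mem_insert_self _ _, ?_, ?_⟩
    · rw [Finset.mem_insert]
      rintro (hc | hc)
      · exact absurd (Fin.ext_iff.mp hc) (by simp)
      · exact hnot 1 (by simp) hc
    · rw [Finset.mem_insert]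
      rintro (hc | hc)
      · exact absurd (Fin.ext_iff.mp hc) (by simp [Nat.mod_eq_of_lt (show 2 < N+4 by omega)])
      · exact hnot 2 (by simp) hc
  · -- left inverse
    intro P hP
    have hadm : admS P.1 := (Finset.mem_filter.mp hP).2
    exact Subtype.ext (Finset.insert_erase hadm.1)
  · -- right inverse
    intro T hT
    rcases Finset.mem_powersetCard.mp hT with ⟨hsub, hcardT⟩
    have h0T : (0 : Fin (N+4)) ∉ T := fun hc => by
      have := hsub hc
      simp at this
    exact Finset.erase_insert h0T

end Specialized
end BettiH3


lemma BettiH3.arith (N l cz cb : ℕ)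
    (hZ : cz + (N+1).choose l = (N+4).choose (l+1))
    (hB : cb = if l = 0 then 0 else (N+1).choose (l-1)) :
    cz - cb = (N+3).choose (l+1) + (if l+1 < 2 then 0 else (N+2).choose (l+1-2)) := by
  cases l with
  | zero =>
    rw [if_pos rfl] at hB
    rw [if_pos (by omega : 0+1 < 2), hB]
    rw [Nat.choose_zero_right] at hZ
    rw [Nat.choose_one_right] at hZ ⊢
    omega
  | succ K =>
    rw [if_neg (Nat.succ_ne_zero K), Nat.succ_sub_one] at hB
    rw [if_neg (by omega : ¬ K+1+1 < 2), show K+1+1-2 = K from rfl]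
    have p1 : (N+4).choose (K+1+1) = (N+3).choose (K+1) + (N+3).choose (K+1+1) :=
      Nat.choose_succ_succ (N+3) (K+1)
    have p2 : (N+3).choose (K+1) = (N+2).choose K + (N+2).choose (K+1) :=
      Nat.choose_succ_succ (N+2) K
    have p3 : (N+2).choose (K+1) = (N+1).choose K + (N+1).choose (K+1) :=
      Nat.choose_succ_succ (N+1) K
    have hZ' : cz + (N+1).choose (K+1) = (N+4).choose (K+1+1) := hZ
    omega

/-- For `n > 3`, the Betti numbers of `h₃ ⊕ ℝ^{n-3}` are
`b_k = (n-1).choose k + (n-2).choose (k-2)` for `0 ≤ k ≤ n`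
(the second binomial coefficient being `0` when `k < 2`).  Here `e 0` plays the role of
`Z` and the only nontrivial bracket is `⁅X₁, X₂⁆ = Z`. -/
theorem betti_h3_oplus_abelian (n : ℕ) (hn : 3 < n) (g : Type) [LieRing g]
    [LieAlgebra ℝ g] (e : Module.Basis (Fin n) ℝ g)
    (he : ∀ i j : Fin n, ⁅e i, e j⁆ =
      if (i : ℕ) = 1 ∧ (j : ℕ) = 2 then e ⟨0, by omega⟩
      else if (i : ℕ) = 2 ∧ (j : ℕ) = 1 then -e ⟨0, by omega⟩
      else 0) :
    ∀ k ≤ n,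
      betti ℝ g k = (n - 1).choose k + (if k < 2 then 0 else (n - 2).choose (k - 2)) := by
  obtain ⟨N, rfl⟩ : ∃ N : ℕ, n = N + 4 := ⟨n - 4, by omega⟩
  intro k hk
  haveI : FiniteDimensional ℝ (AlternatingMap ℝ g ℝ (Fin k)) := BettiH3.fd_alt e k
  show Module.finrank ℝ (ceH ℝ g k) = _
  cases k with
  | zero =>
    have hBZ : ceB ℝ g 0 ≤ ceZ ℝ g 0 := bot_le
    rw [BettiH3.finrank_quot _ _ hBZ]
    have hZ := BettiH3.finrank_ker_delta' e 0
    rw [BettiH3.APcard_zero, Nat.choose_zero_right] at hZ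
    have hZ' : Module.finrank ℝ (ceZ ℝ g 0) = 1 := by
      rw [BettiH3.ceZ_eq e he 0]; omega
    have hB' : Module.finrank ℝ (ceB ℝ g 0) = 0 := by
      show Module.finrank ℝ (⊥ : Submodule ℝ (AlternatingMap ℝ g ℝ (Fin 0))) = 0
      exact finrank_bot ℝ _
    rw [hZ', hB']
    simp
  | succ l =>
    haveI : FiniteDimensional ℝ (AlternatingMap ℝ g ℝ (Fin (l+1))) := BettiH3.fd_alt e (l+1)
    have hBZ : ceB ℝ g (l+1) ≤ ceZ ℝ g (l+1) := by
      rw [BettiH3.ceB_eq e he l, BettiH3.ceZ_eq e he (l+1)]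
      exact BettiH3.range_le_ker_delta' e l
    rw [BettiH3.finrank_quot _ _ hBZ]
    have hZfact : Module.finrank ℝ (ceZ ℝ g (l+1)) + (N+1).choose l = (N+4).choose (l+1) := by
      rw [BettiH3.ceZ_eq e he (l+1)]
      have := BettiH3.finrank_ker_delta' e (l+1)
      rw [BettiH3.APcard_succ l] at this
      exact this
    have hBfact : Module.finrank ℝ (ceB ℝ g (l+1))
        = if l = 0 then 0 else (N+1).choose (l-1) := by
      rw [BettiH3.ceB_eq e he l, BettiH3.finrank_range_delta' e l]
      cases l with
      | zero => rw [if_pos rfl, BettiH3.APcard_zero]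
      | succ K =>
        rw [if_neg (Nat.succ_ne_zero K), Nat.succ_sub_one, BettiH3.APcard_succ K]
    rw [show (N+4-1 : ℕ) = N+3 from rfl, show (N+4-2 : ℕ) = N+2 from rfl]
    exact BettiH3.arith N l _ _ hZfact hBfact
end

section
/- Let n ≥ 2 and let 𝔤 be an n-dimensional solvable real Lie algebra whose derived ideal 𝔤¹ := [𝔤, 𝔤] is 1-dimensional. Then 𝔤 is isomorphic to exactly one of the following Lie algebras: (i) aff(ℝ) (when n = 2); (ii) aff(ℝ) ⊕ ℝ^{n−2} (when n > 2); (iii) the real Heisenberg Lie algebra h_{2m+1} (when n = 2m+1, m ≥ 1); (iv) h_{2m+1} ⊕ ℝ^{n−2m−1} for some m ≥ 1 with 2m+1 < n. -/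
open Module Submodule LinearMap

namespace MDaux

variable {g : Type} [LieRing g] [LieAlgebra ℝ g]

/-- The Lie bracket as a bilinear map. -/
noncomputable def brkt (g : Type) [LieRing g] [LieAlgebra ℝ g] : g →ₗ[ℝ] g →ₗ[ℝ] g :=
  LinearMap.mk₂ ℝ (fun x y => ⁅x, y⁆) add_lie smul_lie lie_add lie_smul

@[simp] lemma brkt_apply (x y : g) : brkt g x y = ⁅x, y⁆ := rfl

/-- The center, as a plain submodule. -/
def ctr (g : Type) [LieRing g] [LieAlgebra ℝ g] : Submodule ℝ g where
  carrier := {x | ∀ y : g, ⁅x, y⁆ = 0}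
  add_mem' := by intro a b ha hb y; rw [add_lie, ha y, hb y, add_zero]
  zero_mem' := by intro y; rw [zero_lie]
  smul_mem' := by intro c x hx y; rw [smul_lie, hx y, smul_zero]

lemma mem_ctr {x : g} : x ∈ ctr g ↔ ∀ y : g, ⁅x, y⁆ = 0 := by unfold ctr; exact Iff.rfl

lemma lie_eq_zero_of_basis {ι : Type} (e : Basis ι ℝ g) (x : g)
    (h : ∀ j, ⁅x, e j⁆ = 0) : ∀ y : g, ⁅x, y⁆ = 0 := by
  have had : LieAlgebra.ad ℝ g x = 0 := by
    apply e.ext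
    intro i
    simpa [LieAlgebra.ad_apply] using h i
  intro y
  have := congrArg (fun f : Module.End ℝ g => f y) had
  simpa [LieAlgebra.ad_apply] using this

lemma card_aux (n m : ℕ) (hmn : 2 * m + 1 ≤ n) :
    Fintype.card {i : Fin n // (i : ℕ) = 0 ∨ 2 * m + 1 ≤ (i : ℕ)} = n - 2 * m := by
  have hb : Function.Bijective
      (fun k : Fin (n - 2 * m) =>
        (⟨⟨if (k : ℕ) = 0 then 0 else (k : ℕ) + 2 * m, by
          rcases k with ⟨k, hk⟩; dsimp; split <;> omega⟩, by
          dsimp; split <;> omega⟩ :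
          {i : Fin n // (i : ℕ) = 0 ∨ 2 * m + 1 ≤ (i : ℕ)})) := by
    constructor
    · rintro ⟨a, ha⟩ ⟨b, hb⟩ hab
      simp only [Subtype.mk.injEq, Fin.mk.injEq] at hab
      apply Fin.ext
      dsimp at hab ⊢
      split at hab <;> split at hab <;> omega
    · rintro ⟨⟨i, hi⟩, hP⟩
      simp only [] at hP
      rcases hP with h0 | h2
      · refine ⟨⟨0, by omega⟩, ?_⟩
        apply Subtype.ext; apply Fin.ext; simp; omega
      · refine ⟨⟨i - 2 * m, by omega⟩, ?_⟩
        apply Subtype.ext; apply Fin.ext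
        simp only []
        split <;> omega
  have := Fintype.card_of_bijective hb
  simpa using this.symm


theorem darboux (N : ℕ) : ∀ (V : Type) [AddCommGroup V] [Module ℝ V] [FiniteDimensional ℝ V]
    (ω : V →ₗ[ℝ] V →ₗ[ℝ] ℝ), (∀ x, ω x x = 0) → finrank ℝ V ≤ N →
    ∃ (m : ℕ) (X Y : Fin m → V),
      (∀ i j, ω (X i) (Y j) = if i = j then 1 else 0) ∧
      (∀ i j, ω (X i) (X j) = 0) ∧
      (∀ i j, ω (Y i) (Y j) = 0) ∧
      (∀ v : V, ∃ r, (∀ u, ω r u = 0) ∧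
        v - r ∈ Submodule.span ℝ (Set.range X ∪ Set.range Y)) := by
  induction N with
  | zero =>
    intro V _ _ _ ω halt hle
    have hsub : Subsingleton V := finrank_zero_iff.mp (Nat.le_zero.mp hle)
    refine ⟨0, Fin.elim0, Fin.elim0, fun i => i.elim0, fun i => i.elim0, fun i => i.elim0,
      fun v => ⟨v, fun u => ?_, by simp⟩⟩
    rw [Subsingleton.elim v 0]
    simp
  | succ N ih =>
    intro V _ _ _ ω halt hle
    by_cases hω : ∀ x y : V, ω x y = 0
    · exact ⟨0, Fin.elim0, Fin.elim0, fun i => i.elim0, fun i => i.elim0, fun i => i.elim0,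
        fun v => ⟨v, fun u => hω v u, by simp⟩⟩
    push_neg at hω
    obtain ⟨x, y0, hxy0⟩ := hω
    have hskew : ∀ a b : V, ω a b = - ω b a := by
      intro a b
      have h := halt (a + b)
      simp only [map_add, LinearMap.add_apply, halt a, halt b] at h
      linarith
    set y : V := (ω x y0)⁻¹ • y0 with hy
    have hxy1 : ω x y = 1 := by
      rw [hy, map_smul, smul_eq_mul, inv_mul_cancel₀ hxy0]
    have hyx : ω y x = -1 := by rw [hskew y x, hxy1]
    set W : Submodule ℝ V := LinearMap.ker (ω x) ⊓ LinearMap.ker (ω y) with hW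
    have hmemW : ∀ w : V, w ∈ W ↔ ω x w = 0 ∧ ω y w = 0 := by
      intro w
      simp [hW, Submodule.mem_inf, LinearMap.mem_ker]
    have hdecW : ∀ u : V, u - ω x u • y + ω y u • x ∈ W := by
      intro u
      rw [hmemW]
      constructor
      · simp only [map_add, map_sub, map_smul, smul_eq_mul, hxy1, halt x]
        ring
      · simp only [map_add, map_sub, map_smul, smul_eq_mul, halt y, hyx]
        ring
    have hxnW : x ∉ W := by
      rw [hmemW]
      rintro ⟨-, h2⟩
      rw [hyx] at h2
      norm_num at h2
    have hWle : finrank ℝ ↥W ≤ N := by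
      have hlt : W < LinearMap.ker (ω x) := by
        refine lt_of_le_of_ne inf_le_left (fun h => hxnW ?_)
        rw [h, LinearMap.mem_ker, halt x]
      have h1 : finrank ℝ ↥W < finrank ℝ ↥(LinearMap.ker (ω x)) :=
        Submodule.finrank_lt_finrank_of_lt hlt
      have h2 : finrank ℝ ↥(LinearMap.ker (ω x)) ≤ finrank ℝ V :=
        Submodule.finrank_le _
      omega
    set ω' : ↥W →ₗ[ℝ] ↥W →ₗ[ℝ] ℝ := ω.compl₁₂ W.subtype W.subtype with hω'
    have hω'app : ∀ a b : ↥W, ω' a b = ω (a : V) (b : V) := fun a b => rfl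
    obtain ⟨m, X', Y', hXY', hXX', hYY', hdec'⟩ :=
      ih ↥W ω' (fun w => halt (w : V)) hWle
    have hWx : ∀ w : ↥W, ω x (w : V) = 0 := fun w => ((hmemW w).mp w.2).1
    have hWy : ∀ w : ↥W, ω y (w : V) = 0 := fun w => ((hmemW w).mp w.2).2
    have hxW : ∀ w : ↥W, ω (w : V) x = 0 := by
      intro w; rw [hskew, hWx w, neg_zero]
    have hyW : ∀ w : ↥W, ω (w : V) y = 0 := by
      intro w; rw [hskew, hWy w, neg_zero]
    refine ⟨m + 1, Fin.cases x (fun i => (X' i : V)), Fin.cases y (fun i => (Y' i : V)),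
      ?_, ?_, ?_, ?_⟩
    · intro i j
      induction i using Fin.cases with
      | zero =>
        induction j using Fin.cases with
        | zero => simpa using hxy1
        | succ j => simp [hWx (Y' j), Fin.succ_ne_zero j, (Fin.succ_ne_zero j).symm]
      | succ i =>
        induction j using Fin.cases with
        | zero => simp [hyW (X' i), Fin.succ_ne_zero i]
        | succ j =>
          have := hXY' i j
          rw [hω'app] at this
          simp only [Fin.cases_succ, this, Fin.succ_inj]
    · intro i j
      induction i using Fin.cases with
      | zero =>
        induction j using Fin.cases with
        | zero => simpa using halt x
        | succ j => simpa using hWx (X' j)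
      | succ i =>
        induction j using Fin.cases with
        | zero => simpa using hxW (X' i)
        | succ j =>
          have := hXX' i j
          rw [hω'app] at this
          simpa using this
    · intro i j
      induction i using Fin.cases with
      | zero =>
        induction j using Fin.cases with
        | zero => simpa using halt y
        | succ j => simpa using hWy (Y' j)
      | succ i =>
        induction j using Fin.cases with
        | zero => simpa using hyW (Y' i)
        | succ j =>
          have := hYY' i j
          rw [hω'app] at this
          simpa using this
    · intro v
      set wv : V := v - ω x v • y + ω y v • x with hwvdef
      have hwv : wv ∈ W := hdecW v
      obtain ⟨r', hr', hspan'⟩ := hdec' ⟨wv, hwv⟩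
      refine ⟨(r' : V), ?_, ?_⟩
      · intro u
        have hu : u - ω x u • y + ω y u • x ∈ W := hdecW u
        have h0 : ω (r' : V) (u - ω x u • y + ω y u • x) = 0 := by
          have := hr' ⟨_, hu⟩
          rw [hω'app] at this
          exact this
        simp only [map_add, map_sub, map_smul, smul_eq_mul] at h0
        have h1 : ω (r' : V) y = 0 := by rw [hskew, hWy r', neg_zero]
        have h2 : ω (r' : V) x = 0 := by rw [hskew, hWx r', neg_zero]
        rw [h1, h2] at h0
        linarith [h0]
      · set X : Fin (m+1) → V := Fin.cases x (fun i => (X' i : V)) with hX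
        set Y : Fin (m+1) → V := Fin.cases y (fun i => (Y' i : V)) with hY
        have hsub : (Submodule.subtype W) '' (Set.range X' ∪ Set.range Y') ⊆
            Set.range X ∪ Set.range Y := by
          rintro _ ⟨w, hw, rfl⟩
          rcases hw with ⟨i, rfl⟩ | ⟨i, rfl⟩
          · exact Or.inl ⟨i.succ, by simp [hX]⟩
          · exact Or.inr ⟨i.succ, by simp [hY]⟩
        have hmem : wv - (r' : V) ∈ Submodule.span ℝ (Set.range X ∪ Set.range Y) := by
          have h1 : ((⟨wv, hwv⟩ - r' : ↥W) : V) ∈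
              Submodule.map W.subtype (Submodule.span ℝ (Set.range X' ∪ Set.range Y')) :=
            Submodule.mem_map_of_mem hspan'
          rw [Submodule.map_span] at h1
          have h2 := Submodule.span_mono hsub h1
          simpa using h2
        have hxmem : x ∈ Submodule.span ℝ (Set.range X ∪ Set.range Y) :=
          Submodule.subset_span (Or.inl ⟨0, by simp [hX]⟩)
        have hymem : y ∈ Submodule.span ℝ (Set.range X ∪ Set.range Y) :=
          Submodule.subset_span (Or.inr ⟨0, by simp [hY]⟩)
        have heq : v - (r' : V) = (wv - (r' : V)) + ω x v • y - ω y v • x := by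
          rw [hwvdef]; abel
        rw [heq]
        exact sub_mem (add_mem hmem (Submodule.smul_mem _ _ hymem))
          (Submodule.smul_mem _ _ hxmem)


section Heis

variable {g : Type} [LieRing g] [LieAlgebra ℝ g] {n m : ℕ}

lemma heis_zero_lie (h0 : 0 < n) (e : Basis (Fin n) ℝ g)
    (H : ∀ i j : Fin n, ⁅e i, e j⁆ =
      if 1 ≤ (i : ℕ) ∧ (i : ℕ) ≤ m ∧ (j : ℕ) = m + (i : ℕ) then e ⟨0, h0⟩
      else if 1 ≤ (j : ℕ) ∧ (j : ℕ) ≤ m ∧ (i : ℕ) = m + (j : ℕ) then -e ⟨0, h0⟩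
      else 0) :
    ∀ y : g, ⁅e ⟨0, h0⟩, y⁆ = 0 := by
  apply lie_eq_zero_of_basis e
  intro j
  rw [H]
  have h00 : ((⟨0, h0⟩ : Fin n) : ℕ) = 0 := rfl
  split_ifs with h1 h2
  · exfalso; omega
  · exfalso; omega
  · rfl

lemma heis_lie_mem_span (h0 : 0 < n) (e : Basis (Fin n) ℝ g)
    (H : ∀ i j : Fin n, ⁅e i, e j⁆ =
      if 1 ≤ (i : ℕ) ∧ (i : ℕ) ≤ m ∧ (j : ℕ) = m + (i : ℕ) then e ⟨0, h0⟩
      else if 1 ≤ (j : ℕ) ∧ (j : ℕ) ≤ m ∧ (i : ℕ) = m + (j : ℕ) then -e ⟨0, h0⟩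
      else 0) :
    ∀ y z : g, ⁅y, z⁆ ∈ (ℝ ∙ (e ⟨0, h0⟩)) := by
  have hb : ∀ i j : Fin n, ⁅e i, e j⁆ ∈ (ℝ ∙ (e ⟨0, h0⟩)) := by
    intro i j
    rw [H i j]
    split_ifs
    · exact Submodule.mem_span_singleton_self _
    · exact neg_mem (Submodule.mem_span_singleton_self _)
    · exact zero_mem _
  have h1 : ∀ (j : Fin n) (y : g), ⁅y, e j⁆ ∈ (ℝ ∙ (e ⟨0, h0⟩)) := by
    intro j y
    have hy : y ∈ Submodule.span ℝ (Set.range e) := by rw [e.span_eq]; trivial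
    induction hy using Submodule.span_induction with
    | mem w hw => obtain ⟨i, rfl⟩ := hw; exact hb i j
    | zero => rw [zero_lie]; exact zero_mem _
    | add a b _ _ ha hb' => rw [add_lie]; exact add_mem ha hb'
    | smul c a _ ha => rw [smul_lie]; exact Submodule.smul_mem _ _ ha
  intro y z
  have hz : z ∈ Submodule.span ℝ (Set.range e) := by rw [e.span_eq]; trivial
  induction hz using Submodule.span_induction with
  | mem w hw => obtain ⟨j, rfl⟩ := hw; exact h1 j y
  | zero => rw [lie_zero]; exact zero_mem _
  | add a b _ _ ha hb' => rw [lie_add]; exact add_mem ha hb'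
  | smul c a _ ha => rw [lie_smul]; exact Submodule.smul_mem _ _ ha

lemma heis_P (h0 : 0 < n) (e : Basis (Fin n) ℝ g)
    (H : ∀ i j : Fin n, ⁅e i, e j⁆ =
      if 1 ≤ (i : ℕ) ∧ (i : ℕ) ≤ m ∧ (j : ℕ) = m + (i : ℕ) then e ⟨0, h0⟩
      else if 1 ≤ (j : ℕ) ∧ (j : ℕ) ≤ m ∧ (i : ℕ) = m + (j : ℕ) then -e ⟨0, h0⟩
      else 0) :
    ∀ x y z : g, ⁅x, ⁅y, z⁆⁆ = 0 := by
  intro x y z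
  obtain ⟨c, hc⟩ := Submodule.mem_span_singleton.mp (heis_lie_mem_span h0 e H y z)
  rw [← hc, lie_smul]
  have h2 : ⁅x, e ⟨0, h0⟩⁆ = 0 := by
    rw [← lie_skew, heis_zero_lie h0 e H x, neg_zero]
  rw [h2, smul_zero]

lemma heis_repr_eq_zero (hmn : 2 * m + 1 ≤ n) (e : Basis (Fin n) ℝ g)
    (H : ∀ i j : Fin n, ⁅e i, e j⁆ =
      if 1 ≤ (i : ℕ) ∧ (i : ℕ) ≤ m ∧ (j : ℕ) = m + (i : ℕ) then e ⟨0, by omega⟩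
      else if 1 ≤ (j : ℕ) ∧ (j : ℕ) ≤ m ∧ (i : ℕ) = m + (j : ℕ) then -e ⟨0, by omega⟩
      else 0)
    (x : g) (hx : ∀ y : g, ⁅x, y⁆ = 0) :
    ∀ k : Fin n, 1 ≤ (k : ℕ) → (k : ℕ) ≤ 2 * m → e.repr x k = 0 := by
  have h0 : 0 < n := by omega
  intro k hk1 hk2
  by_cases hkm : (k : ℕ) ≤ m
  · set j : Fin n := ⟨m + (k : ℕ), by omega⟩ with hj
    have hjv : (j : ℕ) = m + (k : ℕ) := rfl
    have hsum : ∑ i, e.repr x i • ⁅e i, e j⁆ = 0 := by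
      calc ∑ i, e.repr x i • ⁅e i, e j⁆
          = ((brkt g).flip (e j)) (∑ i, e.repr x i • e i) := by
            rw [map_sum]
            exact Finset.sum_congr rfl fun i _ => by rw [map_smul]; rfl
        _ = ⁅x, e j⁆ := by rw [e.sum_repr x]; rfl
        _ = 0 := hx _
    have hsingle : ∑ i, e.repr x i • ⁅e i, e j⁆ = e.repr x k • e ⟨0, h0⟩ := by
      rw [Finset.sum_eq_single k]
      · rw [H k j, if_pos ⟨hk1, hkm, hjv⟩]
      · intro i _ hik
        rw [H i j]
        split_ifs with h1 h2
        · exfalso; exact hik (Fin.ext (by omega))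
        · exfalso; omega
        · rw [smul_zero]
      · intro hk; exact absurd (Finset.mem_univ k) hk
    rw [hsingle] at hsum
    rcases smul_eq_zero.mp hsum with h | h
    · exact h
    · exact absurd h (e.ne_zero _)
  · set j : Fin n := ⟨(k : ℕ) - m, by omega⟩ with hj
    have hjv : (j : ℕ) = (k : ℕ) - m := rfl
    have hsum : ∑ i, e.repr x i • ⁅e i, e j⁆ = 0 := by
      calc ∑ i, e.repr x i • ⁅e i, e j⁆
          = ((brkt g).flip (e j)) (∑ i, e.repr x i • e i) := by
            rw [map_sum]
            exact Finset.sum_congr rfl fun i _ => by rw [map_smul]; rfl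
        _ = ⁅x, e j⁆ := by rw [e.sum_repr x]; rfl
        _ = 0 := hx _
    have hsingle : ∑ i, e.repr x i • ⁅e i, e j⁆ = e.repr x k • (-e ⟨0, h0⟩) := by
      rw [Finset.sum_eq_single k]
      · rw [H k j, if_neg (by omega), if_pos ⟨by omega, by omega, by omega⟩]
      · intro i _ hik
        rw [H i j]
        split_ifs with h1 h2
        · exfalso; omega
        · exfalso; exact hik (Fin.ext (by omega))
        · rw [smul_zero]
      · intro hk; exact absurd (Finset.mem_univ k) hk
    rw [hsingle] at hsum
    rcases smul_eq_zero.mp hsum with h | h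
    · exact h
    · exact absurd (neg_eq_zero.mp h) (e.ne_zero _)

lemma heis_ctr (hmn : 2 * m + 1 ≤ n) (e : Basis (Fin n) ℝ g)
    (H : ∀ i j : Fin n, ⁅e i, e j⁆ =
      if 1 ≤ (i : ℕ) ∧ (i : ℕ) ≤ m ∧ (j : ℕ) = m + (i : ℕ) then e ⟨0, by omega⟩
      else if 1 ≤ (j : ℕ) ∧ (j : ℕ) ≤ m ∧ (i : ℕ) = m + (j : ℕ) then -e ⟨0, by omega⟩
      else 0) :
    finrank ℝ (ctr g) = n - 2 * m := by
  classical
  have h0 : 0 < n := by omega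
  set S : Set (Fin n) := {i : Fin n | (i : ℕ) = 0 ∨ 2 * m + 1 ≤ (i : ℕ)} with hS
  have hC : ctr g = Submodule.span ℝ (e '' S) := by
    apply le_antisymm
    · intro x hx
      rw [Basis.mem_span_image]
      intro i hi
      rw [Finset.mem_coe, Finsupp.mem_support_iff] at hi
      by_contra hiS
      simp only [hS, Set.mem_setOf_eq] at hiS
      push_neg at hiS
      exact hi (heis_repr_eq_zero hmn e H x (mem_ctr.mp hx) i (by omega) (by omega))
    · rw [Submodule.span_le]
      rintro _ ⟨i, hi, rfl⟩
      rw [SetLike.mem_coe, mem_ctr]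
      apply lie_eq_zero_of_basis e
      intro j
      rw [H i j]
      simp only [hS, Set.mem_setOf_eq] at hi
      split_ifs with h1 h2
      · exfalso; omega
      · exfalso; omega
      · rfl
  rw [hC]
  have himg : e '' S = Set.range (e ∘ (Subtype.val : S → Fin n)) := by
    rw [Set.range_comp, Subtype.range_coe]
  rw [himg, finrank_span_eq_card (e.linearIndependent.comp _ Subtype.val_injective)]
  rw [← card_aux n m hmn]
  exact Fintype.card_congr (Equiv.subtypeEquivRight (fun i => by simp [hS]))

end Heis


@[reducible] def Q (n : ℕ) (hn : 2 ≤ n) (g : Type) [LieRing g] [LieAlgebra ℝ g]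
    (c : Fin 4 × ℕ) : Prop :=
  (c.1 = 0 ∧ c.2 = 0 ∧ n = 2 ∧
    ∃ e : Basis (Fin 2) ℝ g, ⁅e 0, e 1⁆ = e 1) ∨
  (c.1 = 1 ∧ c.2 = 0 ∧ 2 < n ∧
    ∃ e : Basis (Fin n) ℝ g, ∀ i j : Fin n, ⁅e i, e j⁆ =
      if (i : ℕ) = 0 ∧ (j : ℕ) = 1 then e j
      else if (i : ℕ) = 1 ∧ (j : ℕ) = 0 then -e i
      else 0) ∨
  (c.1 = 2 ∧ 1 ≤ c.2 ∧ n = 2 * c.2 + 1 ∧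
    ∃ e : Basis (Fin n) ℝ g, ∀ i j : Fin n, ⁅e i, e j⁆ =
      if 1 ≤ (i : ℕ) ∧ (i : ℕ) ≤ c.2 ∧ (j : ℕ) = c.2 + (i : ℕ) then e ⟨0, by omega⟩
      else if 1 ≤ (j : ℕ) ∧ (j : ℕ) ≤ c.2 ∧ (i : ℕ) = c.2 + (j : ℕ) then
        -e ⟨0, by omega⟩
      else 0) ∨
  (c.1 = 3 ∧ 1 ≤ c.2 ∧ 2 * c.2 + 1 < n ∧
    ∃ e : Basis (Fin n) ℝ g, ∀ i j : Fin n, ⁅e i, e j⁆ =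
      if 1 ≤ (i : ℕ) ∧ (i : ℕ) ≤ c.2 ∧ (j : ℕ) = c.2 + (i : ℕ) then e ⟨0, by omega⟩
      else if 1 ≤ (j : ℕ) ∧ (j : ℕ) ≤ c.2 ∧ (i : ℕ) = c.2 + (j : ℕ) then
        -e ⟨0, by omega⟩
      else 0)

set_option maxHeartbeats 2000000 in
theorem main_exists (n : ℕ) (hn : 2 ≤ n) (g : Type) [LieRing g] [LieAlgebra ℝ g]
    (hdim : finrank ℝ g = n)
    (hder : finrank ℝ (LieAlgebra.derivedSeries ℝ g 1) = 1) :
    ∃ c : Fin 4 × ℕ, Q n hn g c := by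
  classical
  haveI hfd : FiniteDimensional ℝ g := Module.finite_of_finrank_pos (by omega)
  set D := LieAlgebra.derivedSeries ℝ g 1 with hD
  have hDmem : ∀ x y : g, ⁅x, y⁆ ∈ D := by
    intro x y
    have hDtop : D = ⁅(⊤ : LieIdeal ℝ g), (⊤ : LieIdeal ℝ g)⁆ := by
      rw [hD, LieAlgebra.derivedSeries_def, LieAlgebra.derivedSeriesOfIdeal_succ,
        LieAlgebra.derivedSeriesOfIdeal_zero]
    rw [hDtop]
    exact LieSubmodule.lie_mem_lie (LieSubmodule.mem_top x) (LieSubmodule.mem_top y)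
  haveI : Module.Finite ℝ ↥D := Module.finite_of_finrank_pos (by rw [hder]; norm_num)
  set bD : Basis (Fin 1) ℝ ↥D := finBasisOfFinrankEq ℝ ↥D hder with hbD
  set Z : g := (bD 0 : g) with hZdef
  have hZD : Z ∈ D := (bD 0).2
  have hZ : Z ≠ 0 := by
    intro h
    exact bD.ne_zero 0 (by rwa [← ZeroMemClass.coe_eq_zero])
  set βD : g →ₗ[ℝ] g →ₗ[ℝ] ↥D := LinearMap.mk₂ ℝ (fun x y => ⟨⁅x, y⁆, hDmem x y⟩)
    (fun a b y => Subtype.ext (by simpa using add_lie a b y))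
    (fun c a y => Subtype.ext (by simpa using smul_lie c a y))
    (fun x a b => Subtype.ext (by simpa using lie_add x a b))
    (fun c x y => Subtype.ext (by simpa using lie_smul c x y)) with hβD
  set ω : g →ₗ[ℝ] g →ₗ[ℝ] ℝ := βD.compr₂ (bD.coord 0) with hω
  have hkey : ∀ x y : g, ⁅x, y⁆ = ω x y • Z := by
    intro x y
    have hw : ∀ w : ↥D, (w : g) = bD.repr w 0 • Z := by
      intro w
      conv_lhs => rw [← bD.sum_repr w]
      rw [Fin.sum_univ_one]
      simp [hZdef]
    have h1 : ω x y = bD.repr ⟨⁅x, y⁆, hDmem x y⟩ 0 := by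
      rw [hω]
      simp only [LinearMap.compr₂_apply, Basis.coord_apply]
      rfl
    rw [h1]
    exact hw ⟨⁅x, y⁆, hDmem x y⟩
  have halt : ∀ x : g, ω x x = 0 := by
    intro x
    have h := (hkey x x).symm
    rw [lie_self] at h
    rcases smul_eq_zero.mp h with h' | h'
    · exact h'
    · exact absurd h' hZ
  have hskew : ∀ x y : g, ω x y = -ω y x := by
    intro x y
    have h : ω x y • Z = (-ω y x) • Z := by
      rw [← hkey, neg_smul, ← hkey, ← lie_skew]
    exact smul_left_injective ℝ hZ h
  by_cases hcen : ∀ y : g, ω Z y = 0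
  · -- Z is central : Heisenberg cases
    obtain ⟨m, X, Y, hXY, hXX, hYY, hdec⟩ := darboux n g ω halt (le_of_eq hdim)
    set R : Submodule ℝ g := LinearMap.ker ω with hR
    have hmemR : ∀ r : g, r ∈ R ↔ ∀ u : g, ω r u = 0 := by
      intro r
      rw [hR, LinearMap.mem_ker]
      constructor
      · intro h u; rw [h]; rfl
      · intro h; exact LinearMap.ext h
    have hZR : Z ∈ R := (hmemR Z).mpr hcen
    have hm1 : 1 ≤ m := by
      by_contra hm0
      have hm0' : m = 0 := by omega
      subst hm0'
      have hall : ∀ x y : g, ω x y = 0 := by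
        intro x y
        obtain ⟨r, hr, hxr⟩ := hdec x
        rw [Set.range_eq_empty X, Set.range_eq_empty Y, Set.union_empty,
          Submodule.span_empty, Submodule.mem_bot, sub_eq_zero] at hxr
        rw [hxr]
        exact hr y
      have hZ0 : Z = 0 := by
        have hDbot : D ≤ ⊥ := by
          have hDtop : D = ⁅(⊤ : LieIdeal ℝ g), (⊤ : LieIdeal ℝ g)⁆ := by
            rw [hD, LieAlgebra.derivedSeries_def, LieAlgebra.derivedSeriesOfIdeal_succ,
              LieAlgebra.derivedSeriesOfIdeal_zero]
          rw [hDtop, LieSubmodule.lieIdeal_oper_eq_span, LieSubmodule.lieSpan_le]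
          rintro w ⟨x, y, rfl⟩
          have hw : ⁅(x : g), (y : g)⁆ = 0 := by rw [hkey, hall, zero_smul]
          rw [SetLike.mem_coe, hw]
          exact zero_mem _
        exact (LieSubmodule.mem_bot _).mp (hDbot hZD)
      exact hZ hZ0
    have hpair1 : ∀ (c : Fin m ⊕ Fin m → ℝ) (i : Fin m),
        ω (∑ k, c k • Sum.elim X Y k) (Y i) = c (Sum.inl i) := by
      intro c i
      rw [map_sum, LinearMap.sum_apply, Fintype.sum_sum_type]
      simp only [Sum.elim_inl, Sum.elim_inr, map_smul, LinearMap.smul_apply, smul_eq_mul,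
        hXY, hYY, mul_ite, mul_one, mul_zero, Finset.sum_ite_eq, Finset.sum_ite_eq',
        Finset.mem_univ, if_true, Finset.sum_const_zero, add_zero]
    have hpair2 : ∀ (c : Fin m ⊕ Fin m → ℝ) (i : Fin m),
        ω (X i) (∑ k, c k • Sum.elim X Y k) = c (Sum.inr i) := by
      intro c i
      rw [map_sum, Fintype.sum_sum_type]
      simp only [Sum.elim_inl, Sum.elim_inr, map_smul, smul_eq_mul,
        hXX, hXY, mul_ite, mul_one, mul_zero, Finset.sum_ite_eq, Finset.sum_ite_eq',
        Finset.mem_univ, if_true, Finset.sum_const_zero, zero_add]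
    have li : LinearIndependent ℝ (Sum.elim X Y) := by
      rw [Fintype.linearIndependent_iff]
      intro c hc k
      rcases k with i | i
      · have h := hpair1 c i
        rw [hc] at h
        simpa using h.symm
      · have h := hpair2 c i
        rw [hc] at h
        simpa using h.symm
    set S : Submodule ℝ g := Submodule.span ℝ (Set.range (Sum.elim X Y)) with hS
    have hSrank : finrank ℝ ↥S = 2 * m := by
      rw [hS, finrank_span_eq_card li, Fintype.card_sum, Fintype.card_fin]
      omega
    have hdisj : S ⊓ R = ⊥ := by
      rw [eq_bot_iff]
      rintro s hs
      obtain ⟨hsS, hsR⟩ := Submodule.mem_inf.mp hs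
      rw [hS] at hsS
      obtain ⟨c, hc⟩ := (mem_span_range_iff_exists_fun ℝ).mp hsS
      have hc0 : ∀ k, c k = 0 := by
        intro k
        rcases k with i | i
        · have h := hpair1 c i
          rw [hc, (hmemR s).mp hsR (Y i)] at h
          exact h.symm
        · have h := hpair2 c i
          have h2 : ω (X i) s = 0 := by
            rw [hskew, (hmemR s).mp hsR (X i), neg_zero]
          rw [hc, h2] at h
          exact h.symm
      rw [Submodule.mem_bot, ← hc]
      apply Finset.sum_eq_zero
      intro k _
      rw [hc0 k, zero_smul]
    have hsup : S ⊔ R = ⊤ := by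
      rw [eq_top_iff]
      intro x _
      obtain ⟨r, hr, hxr⟩ := hdec x
      have hrR : r ∈ R := (hmemR r).mpr hr
      have hxS : x - r ∈ S := by
        rw [hS, Set.Sum.elim_range]
        exact hxr
      have hxe : x = (x - r) + r := by abel
      rw [hxe]
      exact add_mem (Submodule.mem_sup_left hxS) (Submodule.mem_sup_right hrR)
    have hcount : n = 2 * m + finrank ℝ ↥R := by
      have h := Submodule.finrank_sup_add_finrank_inf_eq S R
      rw [hsup, hdisj, finrank_top, finrank_bot, hdim, hSrank, add_zero] at h
      omega
    have hR1 : 1 ≤ finrank ℝ ↥R := by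
      have h1 : (ℝ ∙ Z) ≤ R := by rwa [Submodule.span_singleton_le_iff_mem]
      have h2 := Submodule.finrank_mono h1
      rwa [finrank_span_singleton hZ] at h2
    have hmn : 2 * m + 1 ≤ n := by omega
    set Z' : ↥R := ⟨Z, hZR⟩ with hZ'
    have hZ'ne : Z' ≠ 0 := by
      intro h
      apply hZ
      have := congrArg (Subtype.val : ↥R → g) h
      simpa [hZ'] using this
    obtain ⟨U', hcompl⟩ := Submodule.exists_isCompl (ℝ ∙ Z')
    have hU'rank : finrank ℝ ↥U' = n - 2 * m - 1 := by
      have h := Submodule.finrank_add_eq_of_isCompl hcompl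
      rw [finrank_span_singleton hZ'ne] at h
      omega
    set ub : Basis (Fin (n - 2 * m - 1)) ℝ ↥U' := finBasisOfFinrankEq ℝ _ hU'rank with hub
    set JU : ↥U' →ₗ[ℝ] g := R.subtype.comp U'.subtype with hJU
    have hJUR : ∀ w : ↥U', JU w ∈ R := fun w => (w : ↥R).2
    have hωJU : ∀ (w : ↥U') (u : g), ω (JU w) u = 0 := fun w u => (hmemR _).mp (hJUR w) u
    have hωJU' : ∀ (w : ↥U') (u : g), ω u (JU w) = 0 := by
      intro w u; rw [hskew, hωJU, neg_zero]
    set v : Fin n → g := fun i =>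
      if h0 : (i : ℕ) = 0 then Z
      else if h1 : (i : ℕ) ≤ m then X ⟨(i : ℕ) - 1, by omega⟩
      else if h2 : (i : ℕ) ≤ 2 * m then Y ⟨(i : ℕ) - 1 - m, by omega⟩
      else JU (ub ⟨(i : ℕ) - 1 - 2 * m, by have := i.isLt; omega⟩) with hv
    have hv0 : ∀ i : Fin n, (i : ℕ) = 0 → v i = Z := by
      intro i hi; simp only [hv]; rw [dif_pos hi]
    have hvX : ∀ (i : Fin n) (h0 : ¬(i : ℕ) = 0) (h1 : (i : ℕ) ≤ m),
        v i = X ⟨(i : ℕ) - 1, by omega⟩ := by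
      intro i h0 h1; simp only [hv]; rw [dif_neg h0, dif_pos h1]
    have hvY : ∀ (i : Fin n) (h1 : ¬(i : ℕ) ≤ m) (h2 : (i : ℕ) ≤ 2 * m),
        v i = Y ⟨(i : ℕ) - 1 - m, by omega⟩ := by
      intro i h1 h2; simp only [hv]; rw [dif_neg (by omega), dif_neg h1, dif_pos h2]
    have hvU : ∀ (i : Fin n) (h1 : ¬(i : ℕ) ≤ m) (h2 : ¬(i : ℕ) ≤ 2 * m),
        v i = JU (ub ⟨(i : ℕ) - 1 - 2 * m, by have := i.isLt; omega⟩) := by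
      intro i h1 h2; simp only [hv]; rw [dif_neg (by omega), dif_neg h1, dif_neg h2]
    have hZmem : Z ∈ Submodule.span ℝ (Set.range v) :=
      Submodule.subset_span ⟨⟨0, by omega⟩, hv0 _ rfl⟩
    have hXmem : ∀ i : Fin m, X i ∈ Submodule.span ℝ (Set.range v) := by
      intro i
      apply Submodule.subset_span
      refine ⟨⟨(i : ℕ) + 1, by have := i.isLt; omega⟩, ?_⟩
      refine (hvX ⟨(i : ℕ) + 1, by have := i.isLt; omega⟩
        (by exact Nat.succ_ne_zero _) (by exact Nat.succ_le_of_lt i.isLt)).trans ?_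
      exact congrArg X (Fin.ext (by show (i : ℕ) + 1 - 1 = (i : ℕ); omega))
    have hYmem : ∀ i : Fin m, Y i ∈ Submodule.span ℝ (Set.range v) := by
      intro i
      apply Submodule.subset_span
      have hilt := i.isLt
      refine ⟨⟨m + (i : ℕ) + 1, by omega⟩, ?_⟩
      refine (hvY ⟨m + (i : ℕ) + 1, by omega⟩
        (by show ¬ m + (i : ℕ) + 1 ≤ m; omega) (by show m + (i : ℕ) + 1 ≤ 2 * m; omega)).trans ?_
      exact congrArg Y (Fin.ext (by show m + (i : ℕ) + 1 - 1 - m = (i : ℕ); omega))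
    have hJUmem : ∀ w : ↥U', JU w ∈ Submodule.span ℝ (Set.range v) := by
      intro w
      have h1 : JU w ∈ Submodule.map JU ⊤ := ⟨w, trivial, rfl⟩
      rw [← ub.span_eq, Submodule.map_span, ← Set.range_comp] at h1
      refine Submodule.span_mono ?_ h1
      rintro _ ⟨idx, rfl⟩
      have hidx := idx.isLt
      refine ⟨⟨2 * m + 1 + (idx : ℕ), by omega⟩, ?_⟩
      refine (hvU ⟨2 * m + 1 + (idx : ℕ), by omega⟩
        (by show ¬ 2 * m + 1 + (idx : ℕ) ≤ m; omega)
        (by show ¬ 2 * m + 1 + (idx : ℕ) ≤ 2 * m; omega)).trans ?_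
      show JU (ub _) = (JU ∘ ub) idx
      exact congrArg (fun q => JU (ub q))
        (Fin.ext (by show 2 * m + 1 + (idx : ℕ) - 1 - 2 * m = (idx : ℕ); omega))
    have hspan : ⊤ ≤ Submodule.span ℝ (Set.range v) := by
      intro x _
      obtain ⟨r, hr, hxr⟩ := hdec x
      have hrR : r ∈ R := (hmemR r).mpr hr
      have hxsub : x - r ∈ Submodule.span ℝ (Set.range v) := by
        refine Submodule.span_le.mpr ?_ hxr
        rintro w (⟨i, rfl⟩ | ⟨i, rfl⟩)
        · exact hXmem i
        · exact hYmem i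
      have hr' : (⟨r, hrR⟩ : ↥R) ∈ (ℝ ∙ Z') ⊔ U' := by
        rw [hcompl.sup_eq_top]; trivial
      obtain ⟨t, ht, u, hu, htu⟩ := Submodule.mem_sup.mp hr'
      obtain ⟨cz, hcz⟩ := Submodule.mem_span_singleton.mp ht
      have hval : (t : g) + (u : g) = r := by
        have h := congrArg (Subtype.val : ↥R → g) htu
        simpa using h
      have htZ : (t : g) = cz • Z := by
        rw [← hcz]
        simp [hZ']
      have huJ : (u : g) = JU ⟨u, hu⟩ := rfl
      have hxeq : x = (x - r) + (cz • Z + JU ⟨u, hu⟩) := by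
        rw [← huJ, ← htZ, hval]
        abel
      rw [hxeq]
      exact add_mem hxsub (add_mem (Submodule.smul_mem _ _ hZmem) (hJUmem _))
    have hcard : Fintype.card (Fin n) = finrank ℝ g := by rw [Fintype.card_fin, hdim]
    obtain ⟨b, hb⟩ : ∃ b : Basis (Fin n) ℝ g, ⇑b = v :=
      ⟨basisOfTopLeSpanOfCardEqFinrank v hspan hcard,
        coe_basisOfTopLeSpanOfCardEqFinrank v hspan hcard⟩
    have hωv : ∀ i j : Fin n, ω (v i) (v j) =
        (if 1 ≤ (i : ℕ) ∧ (i : ℕ) ≤ m ∧ (j : ℕ) = m + (i : ℕ) then (1 : ℝ)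
         else if 1 ≤ (j : ℕ) ∧ (j : ℕ) ≤ m ∧ (i : ℕ) = m + (j : ℕ) then (-1 : ℝ)
         else 0) := by
      intro i j
      by_cases hi0 : (i : ℕ) = 0
      · rw [hv0 i hi0, if_neg (by omega), if_neg (by omega)]
        exact hcen _
      · by_cases him : (i : ℕ) ≤ m
        · rw [hvX i hi0 him]
          by_cases hj0 : (j : ℕ) = 0
          · rw [hv0 j hj0, if_neg (by omega), if_neg (by omega), hskew, hcen _, neg_zero]
          · by_cases hjm : (j : ℕ) ≤ m
            · rw [hvX j hj0 hjm, if_neg (by omega), if_neg (by omega)]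
              exact hXX _ _
            · by_cases hj2m : (j : ℕ) ≤ 2 * m
              · rw [hvY j hjm hj2m, hXY]
                simp only [Fin.mk.injEq]
                by_cases heq : (j : ℕ) = m + (i : ℕ)
                · rw [if_pos (by omega), if_pos ⟨by omega, him, heq⟩]
                · rw [if_neg (by omega), if_neg (by omega), if_neg (by omega)]
              · rw [hvU j (by omega) (by omega), if_neg (by omega), if_neg (by omega)]
                exact hωJU' _ _
        · by_cases hi2m : (i : ℕ) ≤ 2 * m
          · rw [hvY i him hi2m]
            by_cases hj0 : (j : ℕ) = 0
            · rw [hv0 j hj0, if_neg (by omega), if_neg (by omega), hskew, hcen _, neg_zero]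
            · by_cases hjm : (j : ℕ) ≤ m
              · rw [hvX j hj0 hjm, hskew, hXY]
                simp only [Fin.mk.injEq]
                by_cases heq : (i : ℕ) = m + (j : ℕ)
                · rw [if_pos (by omega), if_neg (by omega), if_pos ⟨by omega, hjm, heq⟩]
                · rw [if_neg (by omega), if_neg (by omega), if_neg (by omega)]
                  norm_num
              · by_cases hj2m : (j : ℕ) ≤ 2 * m
                · rw [hvY j hjm hj2m, if_neg (by omega), if_neg (by omega)]
                  exact hYY _ _
                · rw [hvU j (by omega) (by omega), if_neg (by omega), if_neg (by omega)]
                  exact hωJU' _ _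
          · rw [hvU i (by omega) (by omega), if_neg (by omega), if_neg (by omega)]
            exact hωJU _ _
    have hv0' : v ⟨0, by omega⟩ = Z := hv0 _ rfl
    have hbr : ∀ i j : Fin n, ⁅v i, v j⁆ =
        (if 1 ≤ (i : ℕ) ∧ (i : ℕ) ≤ m ∧ (j : ℕ) = m + (i : ℕ) then v ⟨0, by omega⟩
         else if 1 ≤ (j : ℕ) ∧ (j : ℕ) ≤ m ∧ (i : ℕ) = m + (j : ℕ) then -v ⟨0, by omega⟩
         else 0) := by
      intro i j
      rw [hkey (v i) (v j), hωv i j, hv0']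
      split_ifs
      · rw [one_smul]
      · rw [neg_one_smul]
      · rw [zero_smul]
    by_cases hn2m : n = 2 * m + 1
    · refine ⟨(2, m), Or.inr (Or.inr (Or.inl ⟨rfl, hm1, hn2m, b, ?_⟩))⟩
      intro i j
      rw [hb]
      exact hbr i j
    · refine ⟨(3, m), Or.inr (Or.inr (Or.inr ⟨rfl, hm1, by omega, b, ?_⟩))⟩
      intro i j
      rw [hb]
      exact hbr i j
  · -- Z is not central : aff(R) cases
    push_neg at hcen
    obtain ⟨y0, hy0⟩ := hcen
    have hy0' : ω y0 Z ≠ 0 := by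
      rw [hskew y0 Z]
      simpa using hy0
    set X0 : g := (ω y0 Z)⁻¹ • y0 with hX0
    have hX0Z : ω X0 Z = 1 := by
      rw [hX0, map_smul, LinearMap.smul_apply, smul_eq_mul, inv_mul_cancel₀ hy0']
    set lam : g →ₗ[ℝ] ℝ := ω X0 with hlam
    have hlamZ : lam Z = 1 := hX0Z
    set K : Submodule ℝ g := LinearMap.ker lam with hK
    have hX0K : X0 ∈ K := by
      rw [hK, LinearMap.mem_ker, hlam]
      exact halt X0
    have hbr : ∀ y : g, y ∈ K → ⁅X0, y⁆ = 0 := by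
      intro y hy
      rw [hkey X0 y, show ω X0 y = lam y from rfl, hy, zero_smul]
    have habel : ∀ y z : g, y ∈ K → z ∈ K → ω y z = 0 := by
      intro y z hy hz
      have h1 : ⁅X0, ⁅y, z⁆⁆ = ω y z • Z := by
        rw [hkey y z, lie_smul, hkey X0 Z, hX0Z, one_smul]
      have h2 : ⁅X0, ⁅y, z⁆⁆ = 0 := by
        rw [leibniz_lie, hbr y hy, hbr z hz, zero_lie, lie_zero, add_zero]
      rw [h2] at h1
      rcases smul_eq_zero.mp h1.symm with h | h
      · exact h
      · exact absurd h hZ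
    have hKrank : finrank ℝ ↥K = n - 1 := by
      have hr := lam.finrank_range_add_finrank_ker
      have hsur : LinearMap.range lam = ⊤ := by
        rw [LinearMap.range_eq_top]
        intro c
        exact ⟨c • Z, by rw [map_smul, smul_eq_mul, hlamZ, mul_one]⟩
      rw [hsur, finrank_top, finrank_self, hdim, ← hK] at hr
      omega
    set μ : ↥K →ₗ[ℝ] ℝ := (ω.flip Z).domRestrict K with hμ
    have hμapp : ∀ w : ↥K, μ w = ω (w : g) Z := fun w => rfl
    set X0' : ↥K := ⟨X0, hX0K⟩ with hX0'
    have hμX0' : μ X0' = 1 := by rw [hμapp, hX0', hX0Z]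
    have hWrank : finrank ℝ ↥(LinearMap.ker μ) = n - 2 := by
      have hr := μ.finrank_range_add_finrank_ker
      have hsur : LinearMap.range μ = ⊤ := by
        rw [LinearMap.range_eq_top]
        intro c
        exact ⟨c • X0', by rw [map_smul, smul_eq_mul, hμX0', mul_one]⟩
      rw [hsur, finrank_top, finrank_self, hKrank] at hr
      omega
    set wb : Basis (Fin (n - 2)) ℝ ↥(LinearMap.ker μ) :=
      finBasisOfFinrankEq ℝ _ hWrank with hwb
    set J : ↥(LinearMap.ker μ) →ₗ[ℝ] g := K.subtype.comp (LinearMap.ker μ).subtype with hJ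
    have hJmem : ∀ w : ↥(LinearMap.ker μ), J w ∈ K := fun w => (w : ↥K).2
    have hJlam : ∀ w, lam (J w) = 0 := fun w => (w : ↥K).2
    have hJZ : ∀ w, ω (J w) Z = 0 := fun w => w.2
    set v : Fin n → g := fun i =>
      if h0 : (i : ℕ) = 0 then X0 else if h1 : (i : ℕ) = 1 then Z
      else J (wb ⟨(i : ℕ) - 2, by have := i.isLt; omega⟩) with hv
    have hv0 : ∀ i : Fin n, (i : ℕ) = 0 → v i = X0 := by
      intro i hi; simp only [hv]; rw [dif_pos hi]
    have hv1 : ∀ i : Fin n, (i : ℕ) = 1 → v i = Z := by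
      intro i hi; simp only [hv]; rw [dif_neg (by omega), dif_pos hi]
    have hv2 : ∀ (i : Fin n) (h0 : ¬(i : ℕ) = 0) (h1 : ¬(i : ℕ) = 1),
        v i = J (wb ⟨(i : ℕ) - 2, by have := i.isLt; omega⟩) := by
      intro i hi0 hi1; simp only [hv]; rw [dif_neg hi0, dif_neg hi1]
    have hspan : ⊤ ≤ Submodule.span ℝ (Set.range v) := by
      intro x _
      have hx1K : x - lam x • Z ∈ K := by
        rw [hK, LinearMap.mem_ker, map_sub, map_smul, smul_eq_mul, hlamZ, mul_one, sub_self]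
      set x1' : ↥K := ⟨x - lam x • Z, hx1K⟩ with hx1'
      have hk'mem : x1' - μ x1' • X0' ∈ LinearMap.ker μ := by
        rw [LinearMap.mem_ker, map_sub, map_smul, smul_eq_mul, hμX0', mul_one, sub_self]
      set k'' : ↥(LinearMap.ker μ) := ⟨x1' - μ x1' • X0', hk'mem⟩ with hk''
      have hJk : J k'' = (x - lam x • Z) - μ x1' • X0 := rfl
      have hxeq : x = lam x • Z + μ x1' • X0 + J k'' := by
        rw [hJk]; abel
      have hZmem : Z ∈ Submodule.span ℝ (Set.range v) :=
        Submodule.subset_span ⟨⟨1, by omega⟩, hv1 ⟨1, by omega⟩ rfl⟩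
      have hX0mem : X0 ∈ Submodule.span ℝ (Set.range v) :=
        Submodule.subset_span ⟨⟨0, by omega⟩, hv0 ⟨0, by omega⟩ rfl⟩
      have hJmemspan : ∀ w : ↥(LinearMap.ker μ), J w ∈ Submodule.span ℝ (Set.range v) := by
        intro w
        have h1 : J w ∈ Submodule.map J ⊤ := ⟨w, trivial, rfl⟩
        rw [← wb.span_eq, Submodule.map_span, ← Set.range_comp] at h1
        refine Submodule.span_mono ?_ h1
        rintro _ ⟨idx, rfl⟩
        refine ⟨⟨(idx : ℕ) + 2, by have := idx.isLt; omega⟩, ?_⟩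
        rw [hv2 ⟨(idx : ℕ) + 2, by have := idx.isLt; omega⟩ (by simp) (by simp)]
        show J (wb _) = J (wb idx)
        congr 1
      rw [hxeq]
      exact add_mem (add_mem (Submodule.smul_mem _ _ hZmem)
        (Submodule.smul_mem _ _ hX0mem)) (hJmemspan k'')
    have hcard : Fintype.card (Fin n) = finrank ℝ g := by rw [Fintype.card_fin, hdim]
    obtain ⟨b, hb⟩ : ∃ b : Basis (Fin n) ℝ g, ⇑b = v :=
      ⟨basisOfTopLeSpanOfCardEqFinrank v hspan hcard,
        coe_basisOfTopLeSpanOfCardEqFinrank v hspan hcard⟩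
    have hbXZ : ⁅X0, Z⁆ = Z := by rw [hkey, hX0Z, one_smul]
    have hωX0J : ∀ w, ω X0 (J w) = 0 := fun w => hJlam w
    have hωZJ : ∀ w, ω Z (J w) = 0 := by
      intro w; rw [hskew, hJZ w, neg_zero]
    have hbrJ : ∀ w₁ w₂, ω (J w₁) (J w₂) = 0 := fun w₁ w₂ =>
      habel _ _ (hJmem w₁) (hJmem w₂)
    by_cases hn2 : n = 2
    · refine ⟨(0, 0), Or.inl ⟨rfl, rfl, hn2, b.reindex (finCongr hn2), ?_⟩⟩
      have h0 : (b.reindex (finCongr hn2)) 0 = X0 := by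
        rw [Basis.reindex_apply, hb]
        exact hv0 _ (by simp)
      have h1 : (b.reindex (finCongr hn2)) 1 = Z := by
        rw [Basis.reindex_apply, hb]
        exact hv1 _ (by simp)
      rw [h0, h1, hbXZ]
    · have hn2' : 2 < n := by omega
      refine ⟨(1, 0), Or.inr (Or.inl ⟨rfl, rfl, hn2', b, ?_⟩)⟩
      intro i j
      rw [hb]
      by_cases h1 : (i : ℕ) = 0 ∧ (j : ℕ) = 1
      · rw [if_pos h1, hv0 i h1.1, hv1 j h1.2, hbXZ]
      · rw [if_neg h1]
        by_cases h2 : (i : ℕ) = 1 ∧ (j : ℕ) = 0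
        · rw [if_pos h2, hv1 i h2.1, hv0 j h2.2, ← lie_skew, hbXZ]
        · rw [if_neg h2]
          have hzero : ω (v i) (v j) = 0 := by
            by_cases hi0 : (i : ℕ) = 0
            · by_cases hj0 : (j : ℕ) = 0
              · rw [hv0 i hi0, hv0 j hj0]; exact halt X0
              · by_cases hj1 : (j : ℕ) = 1
                · exact absurd ⟨hi0, hj1⟩ h1
                · rw [hv0 i hi0, hv2 j hj0 hj1]; exact hωX0J _
            · by_cases hi1 : (i : ℕ) = 1
              · by_cases hj0 : (j : ℕ) = 0
                · exact absurd ⟨hi1, hj0⟩ h2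
                · by_cases hj1 : (j : ℕ) = 1
                  · rw [hv1 i hi1, hv1 j hj1]; exact halt Z
                  · rw [hv1 i hi1, hv2 j hj0 hj1]; exact hωZJ _
              · rw [hv2 i hi0 hi1]
                by_cases hj0 : (j : ℕ) = 0
                · rw [hv0 j hj0, hskew, hωX0J _, neg_zero]
                · by_cases hj1 : (j : ℕ) = 1
                  · rw [hv1 j hj1]; exact hJZ _
                  · rw [hv2 j hj0 hj1]; exact hbrJ _ _
          rw [hkey, hzero, zero_smul]

theorem main_unique (n : ℕ) (hn : 2 ≤ n) (g : Type) [LieRing g] [LieAlgebra ℝ g] :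
    ∀ c c' : Fin 4 × ℕ, Q n hn g c → Q n hn g c' → c = c' := by
  have pext : ∀ a b : Fin 4 × ℕ, a.1 = b.1 → a.2 = b.2 → a = b := by
    rintro ⟨a1, a2⟩ ⟨b1, b2⟩ h1 h2
    simp_all
  have key0 : (∃ e : Basis (Fin 2) ℝ g, ⁅e 0, e 1⁆ = e 1) →
      ¬(∀ x y z : g, ⁅x, ⁅y, z⁆⁆ = 0) := by
    rintro ⟨e, he⟩ hP
    have h := hP (e 0) (e 0) (e 1)
    rw [he, he] at h
    exact e.ne_zero 1 h
  have key1 : 2 < n → (∃ e : Basis (Fin n) ℝ g, ∀ i j : Fin n, ⁅e i, e j⁆ =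
      if (i : ℕ) = 0 ∧ (j : ℕ) = 1 then e j
      else if (i : ℕ) = 1 ∧ (j : ℕ) = 0 then -e i
      else 0) → ¬(∀ x y z : g, ⁅x, ⁅y, z⁆⁆ = 0) := by
    rintro hn2 ⟨e, he⟩ hP
    have hb : ⁅e ⟨0, by omega⟩, e ⟨1, by omega⟩⁆ = e ⟨1, by omega⟩ := by
      rw [he, if_pos ⟨rfl, rfl⟩]
    have h := hP (e ⟨0, by omega⟩) (e ⟨0, by omega⟩) (e ⟨1, by omega⟩)
    rw [hb, hb] at h
    exact e.ne_zero _ h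
  have keyP : ∀ (m : ℕ), 2 * m + 1 ≤ n →
      (∃ e : Basis (Fin n) ℝ g, ∀ i j : Fin n, ⁅e i, e j⁆ =
        if 1 ≤ (i : ℕ) ∧ (i : ℕ) ≤ m ∧ (j : ℕ) = m + (i : ℕ) then e ⟨0, by omega⟩
        else if 1 ≤ (j : ℕ) ∧ (j : ℕ) ≤ m ∧ (i : ℕ) = m + (j : ℕ) then -e ⟨0, by omega⟩
        else 0) →
      (∀ x y z : g, ⁅x, ⁅y, z⁆⁆ = 0) ∧ finrank ℝ (ctr g) = n - 2 * m := by
    rintro m hmn ⟨e, he⟩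
    exact ⟨heis_P (by omega) e he, heis_ctr hmn e he⟩
  intro c c' hc hc'
  rcases hc with ⟨ha1, ha2, ha3, hae⟩ | ⟨ha1, ha2, ha3, hae⟩ |
    ⟨ha1, ha2, ha3, hae⟩ | ⟨ha1, ha2, ha3, hae⟩ <;>
    rcases hc' with ⟨hb1, hb2, hb3, hbe⟩ | ⟨hb1, hb2, hb3, hbe⟩ |
      ⟨hb1, hb2, hb3, hbe⟩ | ⟨hb1, hb2, hb3, hbe⟩
  · exact pext c c' (ha1.trans hb1.symm) (ha2.trans hb2.symm)
  · exfalso; omega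
  · exfalso; omega
  · exfalso; omega
  · exfalso; omega
  · exact pext c c' (ha1.trans hb1.symm) (ha2.trans hb2.symm)
  · exact absurd ((keyP c'.2 (by omega) hbe).1) (key1 ha3 hae)
  · exact absurd ((keyP c'.2 (by omega) hbe).1) (key1 ha3 hae)
  · exfalso; omega
  · exact absurd ((keyP c.2 (by omega) hae).1) (key1 hb3 hbe)
  · have hA := (keyP c.2 (by omega) hae).2
    have hB := (keyP c'.2 (by omega) hbe).2
    exact pext c c' (ha1.trans hb1.symm) (by omega)
  · have hA := (keyP c.2 (by omega) hae).2
    have hB := (keyP c'.2 (by omega) hbe).2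
    exfalso; omega
  · exfalso; omega
  · exact absurd ((keyP c.2 (by omega) hae).1) (key1 hb3 hbe)
  · have hA := (keyP c.2 (by omega) hae).2
    have hB := (keyP c'.2 (by omega) hbe).2
    exfalso; omega
  · have hA := (keyP c.2 (by omega) hae).2
    have hB := (keyP c'.2 (by omega) hbe).2
    exact pext c c' (ha1.trans hb1.symm) (by omega)

end MDaux



/-- Classification of `MD(n,1)`-algebras: an `n`-dimensional (`n ≥ 2`) solvable real Lie
algebra whose derived ideal is 1-dimensional is isomorphic to exactly one of:
(i) `aff(ℝ)` (with `n = 2`); (ii) `aff(ℝ) ⊕ ℝ^{n-2}` (with `n > 2`);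
(iii) the Heisenberg algebra `h_{2m+1}` (with `n = 2m+1`, `m ≥ 1`);
(iv) `h_{2m+1} ⊕ ℝ^{n-2m-1}` (with `m ≥ 1`, `2m+1 < n`).
Being isomorphic to each model is expressed by the existence of a basis realizing its
structure constants; the case and the parameter `m` are encoded as a pair in `Fin 4 × ℕ`,
and the classification asserts that exactly one such pair occurs. -/
theorem md_n_one_classification (n : ℕ) (hn : 2 ≤ n) (g : Type) [LieRing g]
    [LieAlgebra ℝ g] [LieAlgebra.IsSolvable g] (hdim : Module.finrank ℝ g = n)
    (hder : Module.finrank ℝ (LieAlgebra.derivedSeries ℝ g 1) = 1) :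
    ∃! c : Fin 4 × ℕ,
      (c.1 = 0 ∧ c.2 = 0 ∧ n = 2 ∧
        ∃ e : Module.Basis (Fin 2) ℝ g, ⁅e 0, e 1⁆ = e 1) ∨
      (c.1 = 1 ∧ c.2 = 0 ∧ 2 < n ∧
        ∃ e : Module.Basis (Fin n) ℝ g, ∀ i j : Fin n, ⁅e i, e j⁆ =
          if (i : ℕ) = 0 ∧ (j : ℕ) = 1 then e j
          else if (i : ℕ) = 1 ∧ (j : ℕ) = 0 then -e i
          else 0) ∨
      (c.1 = 2 ∧ 1 ≤ c.2 ∧ n = 2 * c.2 + 1 ∧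
        ∃ e : Module.Basis (Fin n) ℝ g, ∀ i j : Fin n, ⁅e i, e j⁆ =
          if 1 ≤ (i : ℕ) ∧ (i : ℕ) ≤ c.2 ∧ (j : ℕ) = c.2 + (i : ℕ) then e ⟨0, by omega⟩
          else if 1 ≤ (j : ℕ) ∧ (j : ℕ) ≤ c.2 ∧ (i : ℕ) = c.2 + (j : ℕ) then
            -e ⟨0, by omega⟩
          else 0) ∨
      (c.1 = 3 ∧ 1 ≤ c.2 ∧ 2 * c.2 + 1 < n ∧
        ∃ e : Module.Basis (Fin n) ℝ g, ∀ i j : Fin n, ⁅e i, e j⁆ =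
          if 1 ≤ (i : ℕ) ∧ (i : ℕ) ≤ c.2 ∧ (j : ℕ) = c.2 + (i : ℕ) then e ⟨0, by omega⟩
          else if 1 ≤ (j : ℕ) ∧ (j : ℕ) ≤ c.2 ∧ (i : ℕ) = c.2 + (j : ℕ) then
            -e ⟨0, by omega⟩
          else 0) := by
  obtain ⟨c, hc⟩ := MDaux.main_exists n hn g hdim hder
  exact ⟨c, hc, fun c' hc' => MDaux.main_unique n hn g c' c hc' hc⟩
end
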